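/- arXiv:1805.09587 — 7 statements merged into one kernel-verified Lean document; each statement's English description precedes it below -/
import Mathlib

section
/- Every broken line is isomorphic (via an ℝ-equivariant homeomorphism) to a concatenation of finitely many copies of the extended real line [-∞,∞] with its translation action. In particular, for a broken line L, the set of connected components of the non-fixed locus L \ L^ℝ is finite and nonempty. -/
/-- The model for the concatenation of `n` copies of the extended real line
`[-∞,∞]` glued end to end: a point is a tuple `β : Fin n → EReal` such that
whenever `i < j` and `β j ≠ -∞`, then `β i = ∞`.  The `ℝ`-action is given by
translation in each coordinate. -/
def ConcatModel (n : ℕ) : Set (Fin n → EReal) :=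
  {β | ∀ i j : Fin n, i < j → β j ≠ ⊥ → β i = ⊤}

/-!
Transported along `γ`, the action becomes a flow on `[0,1]` whose orbits are monotone in time.
A point returning to itself at some nonzero time is fixed, since a monotone periodic function is
constant; so every other orbit is strictly increasing. An orbit cannot cross a fixed point (it is
connected), and its limits at `±∞` are fixed, so it fills exactly the open gap between two
consecutive fixed points. List the fixed points as `⊥ = c 0 < c 1 < ⋯ < c n = ⊤` and pick a point
`p k` in the `k`-th gap; the time the orbit of `p k` needs to reach `x` (`-∞` below the gap, `+∞`
above it) is the `k`-th coordinate of `x`. These coordinates give a continuous bijection onto the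
model, a homeomorphism by compactness, and the `n` gaps cover the non-fixed locus.
-/

open Set Filter Topology

theorem Fin.exists_castSucc_lt_le_succ {α : Type*} [LinearOrder α] {n : ℕ} {c : Fin (n + 1) → α}
    {y : α} (h0 : c 0 < y) (hn : y ≤ c (Fin.last n)) :
    ∃ k : Fin n, c k.castSucc < y ∧ y ≤ c k.succ := by
  induction n with
  | zero => exact absurd (h0.trans_le hn) (lt_irrefl _)
  | succ n ih =>
    by_cases h : y ≤ c (Fin.last n).castSucc
    · obtain ⟨k, hk⟩ := ih (c := c ∘ Fin.castSucc) h0 h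
      exact ⟨k.castSucc, hk⟩
    · exact ⟨Fin.last n, not_le.1 h, hn⟩

theorem StrictMono.disjoint_Ioo_castSucc_succ_range {α : Type*} [Preorder α] {n : ℕ}
    {c : Fin (n + 1) → α} (hc : StrictMono c) (k : Fin n) :
    Disjoint (Ioo (c k.castSucc) (c k.succ)) (range c) := by
  rintro s hs hsc x hx
  obtain ⟨j, rfl⟩ := hsc hx
  have h := hs hx
  rw [mem_Ioo, hc.lt_iff_lt, hc.lt_iff_lt] at h
  exact (Fin.castSucc_lt_iff_succ_le.1 h.1).not_gt h.2

theorem Set.Finite.exists_strictMono_fin_range_eq {α : Type*} [LinearOrder α] [BoundedOrder α]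
    [Nontrivial α] {s : Set α} (hs : s.Finite) (hbot : ⊥ ∈ s) (htop : ⊤ ∈ s) :
    ∃ n, 0 < n ∧ ∃ c : Fin (n + 1) → α,
      StrictMono c ∧ c 0 = ⊥ ∧ c (Fin.last n) = ⊤ ∧ range c = s := by
  have hbot' : ⊥ ∈ hs.toFinset := hs.mem_toFinset.2 hbot
  have htop' : ⊤ ∈ hs.toFinset := hs.mem_toFinset.2 htop
  have hcard : 1 < hs.toFinset.card :=
    Finset.one_lt_card.2 ⟨⊥, hbot', ⊤, htop', bot_ne_top⟩
  obtain ⟨n, hn⟩ : ∃ n, hs.toFinset.card = n + 1 := ⟨_, (Nat.sub_add_cancel hcard.le).symm⟩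
  refine ⟨n, by omega, hs.toFinset.orderEmbOfFin hn, (hs.toFinset.orderEmbOfFin hn).strictMono,
    ?_, ?_, by simp⟩
  · rw [Fin.zero_eta.symm, Finset.orderEmbOfFin_zero hn n.succ_pos]
    exact le_bot_iff.1 (Finset.min'_le _ _ hbot')
  · rw [show Fin.last n = ⟨n + 1 - 1, by omega⟩ from rfl, Finset.orderEmbOfFin_last hn n.succ_pos]
    exact top_le_iff.1 (Finset.le_max' _ _ htop')

theorem ConnectedComponents.finite_of_iUnion_isPreconnected {X ι : Type*} [TopologicalSpace X]
    [Finite ι] {s : Set X} {U : ι → Set X} (hU : ∀ i, IsPreconnected (U i))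
    (hs : ⋃ i, U i = s) : Finite (ConnectedComponents s) := by
  have hsub (i : ι) : (mk '' ((↑) ⁻¹' U i : Set s)).Subsingleton := by
    have hpre : IsPreconnected ((↑) ⁻¹' U i : Set s) := by
      refine Topology.IsInducing.subtypeVal.isPreconnected_image.1 ?_
      rw [Subtype.image_preimage_coe, inter_eq_right.2 (hs ▸ subset_iUnion U i)]
      exact hU i
    rintro _ ⟨a, ha, rfl⟩ _ ⟨b, hb, rfl⟩
    exact coe_eq_coe.2 (connectedComponent_eq (hpre.subset_connectedComponent ha hb))
  refine Set.finite_univ_iff.1 ((Set.finite_iUnion fun i => (hsub i).finite).subset ?_)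
  rintro z -
  obtain ⟨x, rfl⟩ := surjective_coe z
  obtain ⟨i, hi⟩ := mem_iUnion.1 (hs.symm ▸ x.2 : (x : X) ∈ ⋃ i, U i)
  exact mem_iUnion.2 ⟨i, x, hi, rfl⟩

theorem Set.Finite.nonempty_compl_of_denselyOrdered {α : Type*} [LinearOrder α]
    [DenselyOrdered α] [Nontrivial α] {s : Set α} (hs : s.Finite) : sᶜ.Nonempty := by
  obtain ⟨a, b, hab⟩ := exists_pair_lt α
  have : Infinite α := Set.infinite_univ_iff.1 ((Ioo_infinite hab).mono (subset_univ _))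
  exact hs.infinite_compl.nonempty

theorem StrictMono.compl_range_eq_iUnion_Ioo {α : Type*} [LinearOrder α] [BoundedOrder α]
    {n : ℕ} {c : Fin (n + 1) → α} (hc : StrictMono c) (hc0 : c 0 = ⊥) (hcn : c (Fin.last n) = ⊤) :
    (range c)ᶜ = ⋃ k : Fin n, Ioo (c k.castSucc) (c k.succ) := by
  ext x
  refine ⟨fun hx => ?_, fun hx => ?_⟩
  · have h0 : c 0 < x := (hc0 ▸ bot_le).lt_of_ne fun h => hx ⟨0, h⟩
    obtain ⟨k, hk, hkx⟩ := Fin.exists_castSucc_lt_le_succ h0 (hcn ▸ le_top)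
    exact mem_iUnion.2 ⟨k, hk, hkx.lt_of_ne fun h => hx ⟨_, h.symm⟩⟩
  · obtain ⟨k, hk⟩ := mem_iUnion.1 hx
    exact (hc.disjoint_Ioo_castSucc_succ_range k).notMem_of_mem_left hk

theorem Monotone.apply_eq_apply_zero_of_periodic {β : Type*} [PartialOrder β] {f : ℝ → β}
    (hf : Monotone f) {c : ℝ} (hp : Function.Periodic f c) (hc : c ≠ 0) (t : ℝ) : f t = f 0 := by
  wlog hc' : 0 < c generalizing c
  · exact this hp.neg (neg_ne_zero.2 hc) (neg_pos.2 (hc.lt_of_le (not_lt.1 hc')))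
  obtain ⟨n, hn⟩ := exists_nat_ge (|t| / c)
  have ht : |t| ≤ n * c := (div_le_iff₀ hc').1 hn
  refine le_antisymm ?_ ?_
  · calc f t ≤ f (n * c) := hf ((le_abs_self t).trans ht)
      _ = f 0 := hp.nat_mul_eq n
  · calc f 0 = f (n * -c) := (hp.neg.nat_mul_eq n).symm
      _ ≤ f t := hf (by linarith [neg_abs_le t])

theorem ConcatModel.exists_forall_lt_eq_top_forall_gt_eq_bot {n : ℕ} (hn : 0 < n)
    {β : Fin n → EReal} (hβ : β ∈ ConcatModel n) :
    ∃ i₀, (∀ i < i₀, β i = ⊤) ∧ ∀ j, i₀ < j → β j = ⊥ := by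
  classical
  by_cases h : ∃ i, β i ≠ ⊤
  · exact ⟨Fin.find _ h, fun i hi => not_not.1 (Fin.find_min h hi),
      fun j hj => by_contra fun hj' => Fin.find_spec h (hβ _ j hj hj')⟩
  · refine ⟨⟨n - 1, by omega⟩, fun i _ => not_not.1 fun hi => h ⟨i, hi⟩, fun j hj => ?_⟩
    exact absurd hj (Nat.le_sub_one_of_lt j.isLt).not_gt

namespace Flow

variable {α : Type*} [TopologicalSpace α]

section Conj

variable {τ β : Type*} [TopologicalSpace τ] [TopologicalSpace β] [AddZero τ]

def conj (ϕ : Flow τ α) (e : α ≃ₜ β) : Flow τ β where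
  toFun t := e ∘ ϕ t ∘ e.symm
  cont' := e.continuous.comp (ϕ.continuous continuous_fst (e.symm.continuous.comp continuous_snd))
  map_add' t₁ t₂ y := by simp [ϕ.map_add]
  map_zero' y := by simp

@[simp]
theorem conj_apply_apply (ϕ : Flow τ α) (e : α ≃ₜ β) (t : τ) (x : α) :
    ϕ.conj e t (e x) = e (ϕ t x) := by
  simp [conj]

def fixedPoints (ϕ : Flow τ α) : Set α := {x | ∀ t, ϕ t x = x}

theorem apply_mem_fixedPoints_conj_iff (ϕ : Flow τ α) (e : α ≃ₜ β) {x : α} :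
    e x ∈ (ϕ.conj e).fixedPoints ↔ x ∈ ϕ.fixedPoints :=
  forall_congr' fun t => by rw [conj_apply_apply, e.injective.eq_iff]

theorem fixedPoints_conj (ϕ : Flow τ α) (e : α ≃ₜ β) :
    (ϕ.conj e).fixedPoints = e '' ϕ.fixedPoints := by
  ext y
  rw [← e.apply_symm_apply y, apply_mem_fixedPoints_conj_iff, e.injective.mem_set_image]

end Conj

section Basic

variable (ϕ : Flow ℝ α) {c x y : α} {s t : ℝ}

theorem continuous_orbit (x : α) : Continuous (ϕ · x) :=
  ϕ.continuous continuous_id continuous_const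

@[simp]
theorem neg_apply_apply : ϕ (-t) (ϕ t x) = x := by
  rw [← map_add, neg_add_cancel, map_zero_apply]

theorem apply_eq_iff_of_mem_fixedPoints (hc : c ∈ ϕ.fixedPoints) : ϕ t x = c ↔ x = c :=
  ⟨fun h => by rw [← ϕ.neg_apply_apply (t := t) (x := x), h, hc], fun h => h ▸ hc t⟩

theorem apply_mem_fixedPoints_iff : ϕ t x ∈ ϕ.fixedPoints ↔ x ∈ ϕ.fixedPoints := by
  refine ⟨fun h => ?_, fun h => (h t).symm ▸ h⟩
  rwa [← (ϕ.apply_eq_iff_of_mem_fixedPoints h).1 rfl] at h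

theorem mem_fixedPoints_of_tendsto [T2Space α] {l : Filter ℝ} [l.NeBot]
    (hl : ∀ r, Tendsto (r + ·) l l) (h : Tendsto (ϕ · x) l (𝓝 y)) : y ∈ ϕ.fixedPoints := by
  intro r
  have hshift : Tendsto (fun t => ϕ r (ϕ t x)) l (𝓝 y) := by
    simpa only [Function.comp_def, ← map_add] using h.comp (hl r)
  exact tendsto_nhds_unique (((ϕ.continuous_toFun r).tendsto y).comp h) hshift

section PartialOrder

variable [PartialOrder α]

theorem monotone_orbit_of_le_apply (h : ∀ x (t : ℝ), 0 ≤ t → x ≤ ϕ t x) (x : α) :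
    Monotone (ϕ · x) := fun s t hst => by
  have := h (ϕ s x) (t - s) (sub_nonneg.2 hst)
  rwa [← map_add, sub_add_cancel] at this

variable {ϕ} (hϕ : ∀ x, Monotone (ϕ · x))
include hϕ

theorem mem_fixedPoints_of_apply_eq (hs : s ≠ 0) (h : ϕ s x = x) : x ∈ ϕ.fixedPoints := by
  have hp : Function.Periodic (ϕ · x) s := fun t => by simp only [map_add, h]
  intro t
  rw [(hϕ x).apply_eq_apply_zero_of_periodic hp hs t, map_zero_apply]

theorem bot_mem_fixedPoints [OrderBot α] : ⊥ ∈ ϕ.fixedPoints :=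
  mem_fixedPoints_of_apply_eq hϕ (by norm_num : (-1 : ℝ) ≠ 0)
    (le_bot_iff.1 ((hϕ ⊥ (by norm_num : (-1 : ℝ) ≤ 0)).trans_eq (ϕ.map_zero_apply ⊥)))

theorem top_mem_fixedPoints [OrderTop α] : ⊤ ∈ ϕ.fixedPoints :=
  mem_fixedPoints_of_apply_eq hϕ one_ne_zero
    (top_le_iff.1 ((ϕ.map_zero_apply ⊤).symm.trans_le (hϕ ⊤ zero_le_one)))

theorem strictMono_orbit (hx : x ∉ ϕ.fixedPoints) : StrictMono (ϕ · x) := by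
  refine (hϕ x).strictMono_of_injective fun s t hst => by_contra fun hne => hx ?_
  refine ϕ.apply_mem_fixedPoints_iff.1 (mem_fixedPoints_of_apply_eq hϕ (x := ϕ s x)
    (sub_ne_zero.2 (Ne.symm hne)) ?_)
  rw [← map_add, sub_add_cancel]
  exact hst.symm

end PartialOrder

section LinearOrder

variable [LinearOrder α] [OrderClosedTopology α]

theorem le_of_apply_le_of_mem_fixedPoints (hc : c ∈ ϕ.fixedPoints) (h : ϕ t x ≤ c) : x ≤ c := by
  by_contra! hcx
  obtain ⟨s, hs⟩ : c ∈ range (ϕ · x) :=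
    (isPreconnected_range (ϕ.continuous_orbit x)).Icc_subset ⟨t, rfl⟩ ⟨0, ϕ.map_zero_apply x⟩
      ⟨h, hcx.le⟩
  exact hcx.ne' ((ϕ.apply_eq_iff_of_mem_fixedPoints hc).1 hs)

theorem apply_le_iff_of_mem_fixedPoints (hc : c ∈ ϕ.fixedPoints) : ϕ t x ≤ c ↔ x ≤ c :=
  ⟨ϕ.le_of_apply_le_of_mem_fixedPoints hc, fun h =>
    ϕ.le_of_apply_le_of_mem_fixedPoints (t := -t) hc (by rwa [neg_apply_apply])⟩

theorem apply_lt_iff_of_mem_fixedPoints (hc : c ∈ ϕ.fixedPoints) : ϕ t x < c ↔ x < c := by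
  simp only [lt_iff_le_and_ne, ϕ.apply_le_iff_of_mem_fixedPoints hc, Ne,
    ϕ.apply_eq_iff_of_mem_fixedPoints hc]

theorem le_apply_iff_of_mem_fixedPoints (hc : c ∈ ϕ.fixedPoints) : c ≤ ϕ t x ↔ c ≤ x := by
  simpa only [not_lt] using (ϕ.apply_lt_iff_of_mem_fixedPoints hc).not

theorem lt_apply_iff_of_mem_fixedPoints (hc : c ∈ ϕ.fixedPoints) : c < ϕ t x ↔ c < x := by
  simpa only [not_le] using (ϕ.apply_le_iff_of_mem_fixedPoints hc).not

end LinearOrder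

end Basic

section Orbit

variable [CompleteLinearOrder α] [OrderTopology α] {ϕ : Flow ℝ α} (hϕ : ∀ x, Monotone (ϕ · x))
  {lo hi p x : α}
include hϕ

theorem iInf_orbit_mem_fixedPoints (x : α) : ⨅ t, ϕ t x ∈ ϕ.fixedPoints :=
  ϕ.mem_fixedPoints_of_tendsto (fun r => tendsto_atBot_add_const_left _ r tendsto_id)
    (tendsto_atBot_iInf (hϕ x))

theorem iSup_orbit_mem_fixedPoints (x : α) : ⨆ t, ϕ t x ∈ ϕ.fixedPoints :=
  ϕ.mem_fixedPoints_of_tendsto (fun r => tendsto_atTop_add_const_left _ r tendsto_id)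
    (tendsto_atTop_iSup (hϕ x))

theorem range_orbit (hx : x ∉ ϕ.fixedPoints) :
    range (ϕ · x) = Ioo (⨅ t, ϕ t x) (⨆ t, ϕ t x) := by
  refine Subset.antisymm ?_ fun y hy => ?_
  · rintro _ ⟨t, rfl⟩
    refine ⟨(iInf_le _ t).lt_of_ne fun h => hx ?_, (le_iSup (ϕ · x) t).lt_of_ne fun h => hx ?_⟩
    · exact ϕ.apply_mem_fixedPoints_iff.1 (h ▸ iInf_orbit_mem_fixedPoints hϕ x)
    · exact ϕ.apply_mem_fixedPoints_iff.1 (h ▸ iSup_orbit_mem_fixedPoints hϕ x)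
  · obtain ⟨s, hs⟩ := iInf_lt_iff.1 hy.1
    obtain ⟨t, ht⟩ := lt_iSup_iff.1 hy.2
    exact (isPreconnected_range (ϕ.continuous_orbit x)).Icc_subset ⟨s, rfl⟩ ⟨t, rfl⟩ ⟨hs.le, ht.le⟩

variable (hlo : lo ∈ ϕ.fixedPoints) (hhi : hi ∈ ϕ.fixedPoints)
  (hgap : Disjoint (Ioo lo hi) ϕ.fixedPoints) (hp : p ∈ Ioo lo hi)
include hlo hhi hgap hp

theorem range_orbit_eq_Ioo : range (ϕ · p) = Ioo lo hi := by
  have hp' : p ∉ ϕ.fixedPoints := hgap.notMem_of_mem_left hp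
  rw [range_orbit hϕ hp']
  congr 1
  · refine le_antisymm (not_lt.1 fun h => hgap.notMem_of_mem_left ⟨h, ?_⟩
      (iInf_orbit_mem_fixedPoints hϕ p))
      (le_iInf fun t => (ϕ.le_apply_iff_of_mem_fixedPoints hlo).2 hp.1.le)
    exact (iInf_le_of_le 0 (ϕ.map_zero_apply p).le).trans_lt hp.2
  · refine le_antisymm (iSup_le fun t => ((ϕ.apply_le_iff_of_mem_fixedPoints hhi).2 hp.2.le))
      (not_lt.1 fun h => hgap.notMem_of_mem_left ⟨?_, h⟩ (iSup_orbit_mem_fixedPoints hϕ p))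
    exact hp.1.trans_le (le_iSup_of_le 0 (ϕ.map_zero_apply p).ge)

end Orbit

section ArrivalTime

variable [Preorder α] {ϕ : Flow ℝ α} {p x : α} {t : ℝ}

noncomputable def arrivalTime (ϕ : Flow ℝ α) (p x : α) : EReal :=
  ⨆ (t : ℝ) (_ : ϕ t p ≤ x), (t : EReal)

theorem monotone_arrivalTime (ϕ : Flow ℝ α) (p : α) : Monotone (ϕ.arrivalTime p) :=
  fun _ _ hxy => biSup_mono fun _ ht => ht.trans hxy

theorem le_arrivalTime (h : ϕ t p ≤ x) : (t : EReal) ≤ ϕ.arrivalTime p x :=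
  le_iSup₂_of_le t h le_rfl

theorem arrivalTime_le (hp : StrictMono (ϕ · p)) (h : x < ϕ t p) : ϕ.arrivalTime p x ≤ t :=
  iSup₂_le fun _ hs => EReal.coe_le_coe_iff.2 (hp.le_iff_le.1 (hs.trans h.le))

theorem arrivalTime_apply_self (hp : StrictMono (ϕ · p)) (t : ℝ) :
    ϕ.arrivalTime p (ϕ t p) = t :=
  le_antisymm (iSup₂_le fun _ hs => EReal.coe_le_coe_iff.2 (hp.le_iff_le.1 hs))
    (le_arrivalTime le_rfl)

end ArrivalTime

section Gap

variable [CompleteLinearOrder α] [OrderTopology α] {ϕ : Flow ℝ α} (hϕ : ∀ x, Monotone (ϕ · x))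
  {lo hi p x y : α} (hlo : lo ∈ ϕ.fixedPoints) (hhi : hi ∈ ϕ.fixedPoints)
  (hgap : Disjoint (Ioo lo hi) ϕ.fixedPoints) (hp : p ∈ Ioo lo hi)

include hlo hp in
theorem arrivalTime_eq_bot (hx : x ≤ lo) : ϕ.arrivalTime p x = ⊥ :=
  iSup₂_eq_bot.2 fun _ h =>
    absurd (h.trans hx) (not_le.2 ((ϕ.lt_apply_iff_of_mem_fixedPoints hlo).2 hp.1))

include hhi hp in
theorem arrivalTime_eq_top (hx : hi ≤ x) : ϕ.arrivalTime p x = ⊤ :=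
  (EReal.eq_top_iff_forall_lt _).2 fun y => (EReal.coe_lt_coe_iff.2 (lt_add_one y)).trans_le
    (le_arrivalTime (((ϕ.apply_lt_iff_of_mem_fixedPoints hhi).2 hp.2).le.trans hx))

include hϕ hlo hhi hgap hp

theorem arrivalTime_apply (t : ℝ) (x : α) :
    ϕ.arrivalTime p (ϕ t x) = ϕ.arrivalTime p x + t := by
  rcases le_or_gt x lo with hxlo | hlox
  · rw [arrivalTime_eq_bot hlo hp hxlo, EReal.bot_add,
      arrivalTime_eq_bot hlo hp ((ϕ.apply_le_iff_of_mem_fixedPoints hlo).2 hxlo)]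
  rcases le_or_gt hi x with hhix | hxhi
  · rw [arrivalTime_eq_top hhi hp hhix, EReal.top_add_coe,
      arrivalTime_eq_top hhi hp ((ϕ.le_apply_iff_of_mem_fixedPoints hhi).2 hhix)]
  obtain ⟨s, rfl⟩ : x ∈ range (ϕ · p) := range_orbit_eq_Ioo hϕ hlo hhi hgap hp ▸ ⟨hlox, hxhi⟩
  have hp' := strictMono_orbit hϕ (hgap.notMem_of_mem_left hp)
  rw [← map_add, arrivalTime_apply_self hp', arrivalTime_apply_self hp', add_comm, EReal.coe_add]

theorem arrivalTime_lt_arrivalTime [DenselyOrdered α] (hxy : x < y) (hy : y ∈ Ioc lo hi) :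
    ϕ.arrivalTime p x < ϕ.arrivalTime p y := by
  have hrange := range_orbit_eq_Ioo hϕ hlo hhi hgap hp
  have hp' := strictMono_orbit hϕ (hgap.notMem_of_mem_left hp)
  obtain ⟨z₁, hxz₁, hz₁y⟩ := exists_between (max_lt hxy hy.1)
  obtain ⟨z₂, hz₁₂, hz₂y⟩ := exists_between hz₁y
  obtain ⟨t₁, rfl⟩ : z₁ ∈ range (ϕ · p) :=
    hrange ▸ ⟨(le_max_right _ _).trans_lt hxz₁, hz₁y.trans_le hy.2⟩
  obtain ⟨t₂, rfl⟩ : z₂ ∈ range (ϕ · p) :=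
    hrange ▸ ⟨((le_max_right _ _).trans_lt hxz₁).trans hz₁₂, hz₂y.trans_le hy.2⟩
  calc ϕ.arrivalTime p x ≤ t₁ := arrivalTime_le hp' ((le_max_left _ _).trans_lt hxz₁)
    _ < t₂ := EReal.coe_lt_coe_iff.2 (hp'.lt_iff_lt.1 hz₁₂)
    _ ≤ ϕ.arrivalTime p y := le_arrivalTime hz₂y.le

theorem exists_mem_Icc_arrivalTime_eq (v : EReal) : ∃ x ∈ Icc lo hi, ϕ.arrivalTime p x = v := by
  induction v using EReal.rec with
  | bot => exact ⟨lo, ⟨le_rfl, (hp.1.trans hp.2).le⟩, arrivalTime_eq_bot hlo hp le_rfl⟩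
  | top => exact ⟨hi, ⟨(hp.1.trans hp.2).le, le_rfl⟩, arrivalTime_eq_top hhi hp le_rfl⟩
  | coe t =>
    exact ⟨ϕ t p, Ioo_subset_Icc_self (range_orbit_eq_Ioo hϕ hlo hhi hgap hp ▸ mem_range_self t),
      arrivalTime_apply_self (strictMono_orbit hϕ (hgap.notMem_of_mem_left hp)) t⟩

theorem continuous_arrivalTime : Continuous (ϕ.arrivalTime p) :=
  (ϕ.monotone_arrivalTime p).continuous_of_surjective fun v =>
    (exists_mem_Icc_arrivalTime_eq hϕ hlo hhi hgap hp v).imp fun _ h => h.2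

end Gap

section Classification

variable [CompleteLinearOrder α] [OrderTopology α] {ϕ : Flow ℝ α} (hϕ : ∀ x, Monotone (ϕ · x))

section Enumeration

variable {n : ℕ} {c : Fin (n + 1) → α} (hc : StrictMono c) (hrange : range c = ϕ.fixedPoints)
  {p : Fin n → α} (hp : ∀ k, p k ∈ Ioo (c k.castSucc) (c k.succ))
include hc hrange hp

theorem arrivalTimes_mem_concatModel (x : α) :
    (fun k => ϕ.arrivalTime (p k) x) ∈ ConcatModel n := by
  intro i j hij hj
  refine arrivalTime_eq_top (hrange ▸ mem_range_self _) (hp i) ?_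
  refine (hc.monotone (Fin.succ_le_castSucc_iff.2 hij)).trans (not_le.1 fun hx => hj ?_).le
  exact arrivalTime_eq_bot (hrange ▸ mem_range_self _) (hp j) hx

include hϕ

theorem injective_arrivalTimes [DenselyOrdered α] (hc0 : c 0 = ⊥) (hcn : c (Fin.last n) = ⊤) :
    Function.Injective fun x k => ϕ.arrivalTime (p k) x := by
  refine Function.Injective.of_lt_imp_ne fun x y hxy h => ?_
  obtain ⟨k, hk⟩ :=
    Fin.exists_castSucc_lt_le_succ (c := c) (hc0 ▸ bot_le.trans_lt hxy) (hcn ▸ le_top)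
  have hgap := hrange ▸ hc.disjoint_Ioo_castSucc_succ_range k
  exact (arrivalTime_lt_arrivalTime hϕ (hrange ▸ mem_range_self _) (hrange ▸ mem_range_self _)
    hgap (hp k) hxy hk).ne (congrFun h k)

theorem exists_arrivalTimes_eq (hn : 0 < n) {β : Fin n → EReal} (hβ : β ∈ ConcatModel n) :
    ∃ x, (fun k => ϕ.arrivalTime (p k) x) = β := by
  have hfix (j : Fin (n + 1)) : c j ∈ ϕ.fixedPoints := hrange ▸ mem_range_self j
  obtain ⟨i₀, hlt, hgt⟩ := ConcatModel.exists_forall_lt_eq_top_forall_gt_eq_bot hn hβ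
  obtain ⟨x, hx, hxβ⟩ := exists_mem_Icc_arrivalTime_eq hϕ (hfix _) (hfix _)
    (hrange ▸ hc.disjoint_Ioo_castSucc_succ_range i₀) (hp i₀) (β i₀)
  refine ⟨x, funext fun k => ?_⟩
  rcases lt_trichotomy k i₀ with hk | rfl | hk
  · rw [hlt k hk]
    exact arrivalTime_eq_top (hfix _) (hp k)
      ((hc.monotone (Fin.succ_le_castSucc_iff.2 hk)).trans hx.1)
  · exact hxβ
  · rw [hgt k hk]
    exact arrivalTime_eq_bot (hfix _) (hp k)
      (hx.2.trans (hc.monotone (Fin.succ_le_castSucc_iff.2 hk)))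

end Enumeration

variable [DenselyOrdered α] [Nontrivial α] (hfin : ϕ.fixedPoints.Finite)
include hϕ hfin

theorem exists_homeomorph_concatModel :
    ∃ n, 0 < n ∧ ∃ e : α ≃ₜ ConcatModel n,
      ∀ t x i, (e (ϕ t x) : Fin n → EReal) i = (e x : Fin n → EReal) i + t := by
  obtain ⟨n, hn, c, hc, hc0, hcn, hrange⟩ :=
    hfin.exists_strictMono_fin_range_eq (bot_mem_fixedPoints hϕ) (top_mem_fixedPoints hϕ)
  choose p hp using fun k : Fin n => exists_between (hc (Fin.castSucc_lt_succ (i := k)))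
  have hfix (j : Fin (n + 1)) : c j ∈ ϕ.fixedPoints := hrange ▸ mem_range_self j
  have hgap (k : Fin n) := hrange ▸ hc.disjoint_Ioo_castSucc_succ_range k
  let E : α ≃ ConcatModel n := Equiv.ofBijective
    (fun x => ⟨fun k => ϕ.arrivalTime (p k) x, arrivalTimes_mem_concatModel hc hrange hp x⟩)
    ⟨fun x y h => injective_arrivalTimes hϕ hc hrange hp hc0 hcn (congrArg Subtype.val h),
      fun β => (exists_arrivalTimes_eq hϕ hc hrange hp hn β.2).imp fun _ h => Subtype.ext h⟩
  have hE : Continuous E :=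
    (continuous_pi fun k =>
      continuous_arrivalTime hϕ (hfix _) (hfix _) (hgap k) (hp k)).subtype_mk _
  exact ⟨n, hn, hE.homeoOfEquivCompactToT2, fun t x k =>
    arrivalTime_apply hϕ (hfix _) (hfix _) (hgap k) (hp k) t x⟩

theorem finite_connectedComponents_compl_fixedPoints :
    Finite (ConnectedComponents (ϕ.fixedPointsᶜ : Set α)) := by
  obtain ⟨n, -, c, hc, hc0, hcn, hrange⟩ :=
    hfin.exists_strictMono_fin_range_eq (bot_mem_fixedPoints hϕ) (top_mem_fixedPoints hϕ)
  exact ConnectedComponents.finite_of_iUnion_isPreconnected (fun _ => isPreconnected_Ioo)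
    (hrange ▸ (hc.compl_range_eq_iUnion_Ioo hc0 hcn).symm)

end Classification

end Flow

/-- Every broken line is isomorphic, via an `ℝ`-equivariant homeomorphism, to a
concatenation of finitely many (`n ≥ 1`) copies of `[-∞,∞]` with its translation
action; in particular the set of connected components of the non-fixed locus is
finite and nonempty. -/
theorem brokenLine_classification {X : Type} [TopologicalSpace X] (μ : ℝ → X → X)
    (hcont : Continuous fun p : ℝ × X => μ p.1 p.2)
    (hzero : ∀ x, μ 0 x = x)
    (hadd : ∀ s t x, μ (s + t) x = μ s (μ t x))
    (hdir : ∃ γ : X ≃ₜ unitInterval, ∀ (x : X) (t : ℝ), 0 ≤ t → γ x ≤ γ (μ t x))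
    (hfix : {x : X | ∀ t : ℝ, μ t x = x}.Finite) :
    (∃ (n : ℕ) (_ : 0 < n) (e : X ≃ₜ ConcatModel n),
      ∀ (t : ℝ) (x : X) (i : Fin n), (e (μ t x)).1 i = (e x).1 i + (t : EReal)) ∧
    Finite (ConnectedComponents {x : X // ¬ ∀ t : ℝ, μ t x = x}) ∧
    Nonempty (ConnectedComponents {x : X // ¬ ∀ t : ℝ, μ t x = x}) := by
  obtain ⟨γ, hγ⟩ := hdir
  let ψ : Flow ℝ X := ⟨μ, hcont, hadd, hzero⟩
  let ϕ := ψ.conj γ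
  have hϕ : ∀ a, Monotone (ϕ · a) := ϕ.monotone_orbit_of_le_apply fun a t ht => by
    simpa [ϕ, ψ, Flow.conj] using hγ (γ.symm a) t ht
  have hfin : ϕ.fixedPoints.Finite := ψ.fixedPoints_conj γ ▸ hfix.image γ
  obtain ⟨n, hn, e, he⟩ := Flow.exists_homeomorph_concatModel hϕ hfin
  let h : {x : X // ¬ ∀ t : ℝ, μ t x = x} ≃ₜ (ϕ.fixedPointsᶜ : Set unitInterval) :=
    γ.subtype fun x => (ψ.apply_mem_fixedPoints_conj_iff γ).not.symm
  refine ⟨⟨n, hn, γ.trans e, fun t x i => ?_⟩, ?_, ?_⟩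
  · simpa [ϕ, ψ] using he t (γ x) i
  · have := Flow.finite_connectedComponents_compl_fixedPoints hϕ hfin
    exact Finite.of_surjective _
      (h.symm.continuous.connectedComponentsMap_surjective h.symm.surjective)
  · obtain ⟨a, ha⟩ := hfin.nonempty_compl_of_denselyOrdered
    exact ⟨ConnectedComponents.mk (h.symm ⟨a, ha⟩)⟩
end

section
/- Let L be a broken line and γ, γ': L ≃ [0,1] two directed homeomorphisms. Then for all x, y ∈ L, γ(x) ≤ γ(y) if and only if γ'(x) ≤ γ'(y). Hence the relation x ≤_L y defined by γ(x) ≤ γ(y) is independent of the choice of directed homeomorphism, and is a linear order on L with least and greatest elements. -/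
/-- For a broken line `X` (topological space with continuous `ℝ`-action, finite
fixed-point set, admitting a directed homeomorphism with `[0,1]`), any two
directed homeomorphisms `γ, γ' : X ≃ₜ [0,1]` induce the same order:
`γ x ≤ γ y ↔ γ' x ≤ γ' y`.  Hence the relation `x ≤_L y` defined by
`γ x ≤ γ y` is independent of the choice of directed homeomorphism, and is a
linear order on `X` with a least and a greatest element. -/
theorem brokenLine_order_well_defined {X : Type} [TopologicalSpace X] (μ : ℝ → X → X)
    (hcont : Continuous fun p : ℝ × X => μ p.1 p.2)
    (hzero : ∀ x, μ 0 x = x)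
    (hadd : ∀ s t x, μ (s + t) x = μ s (μ t x))
    (hfix : {x : X | ∀ t : ℝ, μ t x = x}.Finite)
    (γ γ' : X ≃ₜ unitInterval)
    (hγ : ∀ (x : X) (t : ℝ), 0 ≤ t → γ x ≤ γ (μ t x))
    (hγ' : ∀ (x : X) (t : ℝ), 0 ≤ t → γ' x ≤ γ' (μ t x)) :
    (∀ x y : X, γ x ≤ γ y ↔ γ' x ≤ γ' y) ∧
    (∀ x : X, γ x ≤ γ x) ∧
    (∀ x y z : X, γ x ≤ γ y → γ y ≤ γ z → γ x ≤ γ z) ∧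
    (∀ x y : X, γ x ≤ γ y → γ y ≤ γ x → x = y) ∧
    (∀ x y : X, γ x ≤ γ y ∨ γ y ≤ γ x) ∧
    (∃ b : X, ∀ x : X, γ b ≤ γ x) ∧
    (∃ tp : X, ∀ x : X, γ x ≤ γ tp) := by
  -- The transition map `f = γ' ∘ γ⁻¹ : [0,1] → [0,1]` is continuous and injective,
  -- hence strictly monotone or strictly antitone.
  set f : unitInterval → unitInterval := fun s => γ' (γ.symm s) with hf
  have hfc : Continuous f := γ'.continuous.comp γ.symm.continuous
  have hfi : Function.Injective f := fun a b h => by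
    have := γ'.toEquiv.injective h
    exact γ.symm.toEquiv.injective this
  haveI : Inhabited unitInterval := ⟨0⟩
  have hmono : StrictMono f ∨ StrictAnti f :=
    hfc.strictMono_of_inj_boundedOrder' hfi
  have key : ∀ x y : X, γ x ≤ γ y ↔ γ' x ≤ γ' y := by
    rcases hmono with hm | ha
    · intro x y
      have hx : f (γ x) = γ' x := by simp [hf]
      have hy : f (γ y) = γ' y := by simp [hf]
      rw [← hx, ← hy]
      exact ⟨fun h => hm.le_iff_le.mpr h, fun h => hm.le_iff_le.mp h⟩
    · -- antitone case: contradiction with finiteness of the fixed-point set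
      exfalso
      have hall : ∀ x : X, ∀ t : ℝ, μ t x = x := by
        have hfix' : ∀ (x : X) (t : ℝ), 0 ≤ t → μ t x = x := by
          intro x t ht
          have h1 : γ x ≤ γ (μ t x) := hγ x t ht
          have h2 : γ' x ≤ γ' (μ t x) := hγ' x t ht
          have hx : f (γ x) = γ' x := by simp [hf]
          have hy : f (γ (μ t x)) = γ' (μ t x) := by simp [hf]
          have h3 : γ' (μ t x) ≤ γ' x := by
            rw [← hx, ← hy]; exact ha.antitone h1
          have : γ' (μ t x) = γ' x := le_antisymm h3 h2
          exact γ'.toEquiv.injective this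
        intro x t
        rcases le_or_gt 0 t with ht | ht
        · exact hfix' x t ht
        · have h1 : μ (-t) x = x := hfix' x (-t) (by linarith)
          calc μ t x = μ t (μ (-t) x) := by rw [h1]
            _ = μ (t + -t) x := (hadd t (-t) x).symm
            _ = x := by simp [hzero]
      have : {x : X | ∀ t : ℝ, μ t x = x} = Set.univ := by
        ext x; simp [hall x]
      rw [this] at hfix
      have hXfin : Finite X := Set.finite_univ_iff.mp hfix
      have : Finite unitInterval := Finite.of_equiv X γ.toEquiv
      have : Set.Finite (Set.Icc (0:ℝ) 1) := (Set.Icc 0 1).toFinite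
      exact (Set.Icc_infinite (by norm_num : (0:ℝ) < 1)) this
  refine ⟨key, fun x => le_refl _, fun x y z => le_trans, ?_, fun x y => le_total _ _,
    ⟨γ.symm 0, fun x => by simp⟩, ⟨γ.symm 1, fun x => by simpa using unitInterval.le_one'⟩⟩
  intro x y h1 h2
  have : γ x = γ y := le_antisymm h1 h2
  exact γ.toEquiv.injective this
end

section
/- Let I be a nonempty finite set with a linear preorder ≤_I. Define Rep(I, Bℝ⁺) to be the set of functions α: {(i,j) : i ≤_I j} → ℝ⁺ (where ℝ⁺ = ℝ ∪ {∞}) satisfying α(i,i) = 0 and α(i,j) + α(j,k) = α(i,k) whenever i ≤_I j ≤_I k. If I = {i₀, i₁, ..., iₙ} with i₀ ≤_I i₁ ≤_I ⋯ ≤_I iₙ an enumeration, then the map α ↦ (α(i₀,i₁), α(i₁,i₂), ..., α(i_{n-1}, iₙ)) is an injection of Rep(I, Bℝ⁺) into (ℝ⁺)ⁿ, whose image consists of those tuples (t₁,...,tₙ) such that t_m < ∞ whenever i_m ≤_I i_{m-1}. -/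
/-!
Write `t_m = α(i_m, i_{m+1})`. Along the enumeration the cocycle condition forces
`α(i_a, i_b) = t_a + ⋯ + t_{b-1}` for `a ≤ b` and `α(i_a, i_b) = -α(i_b, i_a)` for `b < a`, so `α`
is determined by `t`. Conversely, these two formulas define an element of `Rep(I, Bℝ⁺)` for every
admissible `t`: on a backward pair `b < a` with `i_a ≤_I i_b`, all of `i_b, …, i_a` are equivalent,
so the steps `t_b, …, t_{a-1}` are finite, which is exactly what cancellation in `ℝ⁺` needs.
-/

/-- `Rep(I, Bℝ⁺)` for a linearly preordered set `I`: functions `α` defined on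
the comparable pairs `i ≤_I j`, with values in `ℝ⁺ = ℝ ∪ {∞}` (encoded as the
elements of `EReal` different from `⊥`), satisfying `α i i = 0` and the cocycle
condition `α i j + α j k = α i k` for `i ≤_I j ≤_I k`. -/
def RepD {I : Type} (r : I → I → Prop) : Set (∀ i j : I, r i j → EReal) :=
  {α | (∀ i j (h : r i j), α i j h ≠ ⊥) ∧ (∀ i (h : r i i), α i i h = 0) ∧
    ∀ i j k (hij : r i j) (hjk : r j k) (hik : r i k),
      α i j hij + α j k hjk = α i k hik}

open Finset

namespace EReal

lemma ne_top_of_add_eq_zero {x y : EReal} (hy : y ≠ ⊥) (h : x + y = 0) : x ≠ ⊤ := by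
  rintro rfl
  simp [top_add_of_ne_bot hy] at h

lemma eq_neg_of_add_eq_zero_left {x y : EReal} (hx : x ≠ ⊥) (hy : y ≠ ⊥) (h : x + y = 0) :
    x = -y := by
  lift y to ℝ using ⟨ne_top_of_add_eq_zero hx (by rwa [add_comm]), hy⟩
  rw [← add_sub_cancel_right (a := x) (b := y), h, zero_sub]

lemma eq_coe_sub_of_coe_add_eq {x z : ℝ} {y : EReal} (h : x + y = z) :
    y = ((z - x : ℝ) : EReal) := by
  rw [← add_sub_cancel_left (a := y) (b := x), h, coe_sub]

end EReal

namespace RepD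

variable {I : Type} {r : I → I → Prop} {α : ∀ i j : I, r i j → EReal}

lemma add_swap_eq_zero (hα : α ∈ RepD r) (htrans : ∀ i j k, r i j → r j k → r i k)
    {i j : I} (hij : r i j) (hji : r j i) : α i j hij + α j i hji = 0 := by
  rw [hα.2.2 i j i hij hji (htrans i j i hij hji)]
  exact hα.2.1 i _

lemma ne_top_of_swap (hα : α ∈ RepD r) (htrans : ∀ i j k, r i j → r j k → r i k)
    {i j : I} (hij : r i j) (hji : r j i) : α i j hij ≠ ⊤ :=
  EReal.ne_top_of_add_eq_zero (hα.1 j i hji) (add_swap_eq_zero hα htrans hij hji)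

lemma eq_neg_of_swap (hα : α ∈ RepD r) (htrans : ∀ i j k, r i j → r j k → r i k)
    {i j : I} (hij : r i j) (hji : r j i) : α i j hij = -α j i hji :=
  EReal.eq_neg_of_add_eq_zero_left (hα.1 i j hij) (hα.1 j i hji)
    (add_swap_eq_zero hα htrans hij hji)

end RepD

section StepSum

variable {n : ℕ} (t : Fin n → EReal)

/-- `t a + ⋯ + t (b - 1)`, reading `t m` as `0` for `m ≥ n`. -/
noncomputable def stepSum (a b : ℕ) : EReal :=
  ∑ m ∈ Ico a b, if h : m < n then t ⟨m, h⟩ else 0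

lemma stepSum_self (a : ℕ) : stepSum t a a = 0 := by
  simp [stepSum]

lemma stepSum_self_succ (m : Fin n) : stepSum t m (m + 1) = t m := by
  simp [stepSum]

lemma stepSum_add_stepSum {a b c : ℕ} (hab : a ≤ b) (hbc : b ≤ c) :
    stepSum t a b + stepSum t b c = stepSum t a c :=
  sum_Ico_consecutive _ hab hbc

lemma stepSum_succ_top {a : ℕ} {m : Fin n} (h : a ≤ m) :
    stepSum t a (m + 1) = stepSum t a m + t m := by
  rw [← stepSum_self_succ t m, stepSum_add_stepSum t h (Nat.le_succ _)]

variable {t}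

lemma stepSum_ne_bot (ht : ∀ m, t m ≠ ⊥) (a b : ℕ) : stepSum t a b ≠ ⊥ := by
  refine sum_induction _ (· ≠ ⊥) (fun x y hx hy => ?_) EReal.zero_ne_bot fun m _ => ?_
  · simp [EReal.add_eq_bot_iff, hx, hy]
  · split_ifs
    exacts [ht _, EReal.zero_ne_bot]

lemma stepSum_ne_top {a b : ℕ} (ht : ∀ m : Fin n, a ≤ m → (m : ℕ) < b → t m ≠ ⊤) :
    stepSum t a b ≠ ⊤ := by
  refine sum_induction _ (· ≠ ⊤) (fun x y => EReal.add_ne_top) EReal.zero_ne_top fun m hm => ?_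
  rw [mem_Ico] at hm
  split_ifs with h
  exacts [ht ⟨m, h⟩ hm.1 hm.2, EReal.zero_ne_top]

end StepSum

section SignedExt

variable {ι : Type*} [LinearOrder ι] (s : ι → ι → EReal)

noncomputable def signedExt (a b : ι) : EReal :=
  if a ≤ b then s a b else -s b a

variable {s}

lemma signedExt_of_le {a b : ι} (h : a ≤ b) : signedExt s a b = s a b :=
  if_pos h

lemma signedExt_of_lt {a b : ι} (h : b < a) : signedExt s a b = -s b a :=
  if_neg h.not_ge

lemma signedExt_add_signedExt (hs : ∀ a b c, a ≤ b → b ≤ c → s a b + s b c = s a c)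
    (hbot : ∀ a b, a ≤ b → s a b ≠ ⊥) {a b c : ι} (hba_top : b < a → s b a ≠ ⊤)
    (hcb_top : c < b → s c b ≠ ⊤) (hca_top : c < a → s c a ≠ ⊤) :
    signedExt s a b + signedExt s b c = signedExt s a c := by
  rcases le_or_gt a b with hab | hba
  · rcases le_or_gt b c with hbc | hcb
    · rw [signedExt_of_le hab, signedExt_of_le hbc, signedExt_of_le (hab.trans hbc),
        hs a b c hab hbc]
    rw [signedExt_of_le hab, signedExt_of_lt hcb]
    lift s c b to ℝ using ⟨hcb_top hcb, hbot c b hcb.le⟩ with y hy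
    rcases le_or_gt a c with hac | hca
    · rw [signedExt_of_le hac, ← hs a c b hac hcb.le, ← hy, ← sub_eq_add_neg,
        EReal.add_sub_cancel_right]
    rw [signedExt_of_lt hca]
    lift s c a to ℝ using ⟨hca_top hca, hbot c a hca.le⟩ with x hx
    have hsum := hs c a b hca.le hab
    rw [← hx, ← hy] at hsum
    rw [EReal.eq_coe_sub_of_coe_add_eq hsum]
    norm_cast
    ring
  rw [signedExt_of_lt hba]
  lift s b a to ℝ using ⟨hba_top hba, hbot b a hba.le⟩ with x hx
  rcases le_or_gt a c with hac | hca
  · rw [signedExt_of_le (hba.le.trans hac), signedExt_of_le hac, ← hs b a c hba.le hac, ← hx,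
      add_comm, ← sub_eq_add_neg, EReal.add_sub_cancel_left]
  rw [signedExt_of_lt hca]
  lift s c a to ℝ using ⟨hca_top hca, hbot c a hca.le⟩ with z hz
  rcases le_or_gt b c with hbc | hcb
  · have hsum := hs b c a hbc hca.le
    rw [← hx, ← hz, add_comm] at hsum
    rw [signedExt_of_le hbc, EReal.eq_coe_sub_of_coe_add_eq hsum]
    norm_cast
    ring
  · have hsum := hs c b a hcb.le hba.le
    rw [← hx, ← hz, add_comm] at hsum
    rw [signedExt_of_lt hcb, EReal.eq_coe_sub_of_coe_add_eq hsum]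
    norm_cast
    ring

lemma signedExt_mem_repD {I : Type} {r : I → I → Prop} (p : I → ι)
    (hs : ∀ a b c, a ≤ b → b ≤ c → s a b + s b c = s a c) (hs_self : ∀ a, s a a = 0)
    (hbot : ∀ a b, a ≤ b → s a b ≠ ⊥) (htop : ∀ i j, r i j → p j < p i → s (p j) (p i) ≠ ⊤) :
    (fun i j (_ : r i j) => signedExt s (p i) (p j)) ∈ RepD r := by
  refine ⟨fun i j hij => ?_, fun i _ => ?_, fun i j k hij hjk hik => ?_⟩ <;> dsimp only
  · rcases le_or_gt (p i) (p j) with h | h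
    · rw [signedExt_of_le h]
      exact hbot _ _ h
    · rw [signedExt_of_lt h, Ne, EReal.neg_eq_bot_iff]
      exact htop i j hij h
  · rw [signedExt_of_le le_rfl, hs_self]
  · exact signedExt_add_signedExt hs hbot (htop i j hij) (htop j k hjk) (htop i k hik)

end SignedExt

section Chain

variable {I : Type} {r : I → I → Prop} {n : ℕ} {e : Fin (n + 1) → I} {p : I → Fin (n + 1)}

noncomputable def chainCocycle (p : I → Fin (n + 1)) (t : Fin n → EReal) (i j : I) : EReal :=
  signedExt (fun a b : Fin (n + 1) => stepSum t a b) (p i) (p j)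

lemma chainCocycle_mem_repD (hmono : ∀ m m' : Fin (n + 1), m ≤ m' → r (e m) (e m'))
    (htrans : ∀ i j k, r i j → r j k → r i k) (hep : Function.RightInverse p e)
    {t : Fin n → EReal} (hbot : ∀ m, t m ≠ ⊥)
    (htop : ∀ m : Fin n, r (e m.succ) (e m.castSucc) → t m ≠ ⊤) :
    (fun i j (_ : r i j) => chainCocycle p t i j) ∈ RepD r := by
  refine signedExt_mem_repD p (fun a b c hab hbc => stepSum_add_stepSum t hab hbc)
    (fun a => stepSum_self t a) (fun a b _ => stepSum_ne_bot hbot a b)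
    fun i j hij _ => stepSum_ne_top fun m hjm hmi => htop m ?_
  have h_succ : r (e m.succ) (e (p i)) := hmono _ _ (Fin.castSucc_lt_iff_succ_le.mp hmi)
  have h_cast : r (e (p j)) (e m.castSucc) := hmono _ _ hjm
  rw [hep] at h_succ h_cast
  exact htrans _ _ _ (htrans _ _ _ h_succ hij) h_cast

variable (hmono : ∀ m m' : Fin (n + 1), m ≤ m' → r (e m) (e m'))

def chainSteps (α : ∀ i j : I, r i j → EReal) (m : Fin n) : EReal :=
  α (e m.castSucc) (e m.succ) (hmono _ _ Fin.castSucc_lt_succ.le)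

lemma RepD.apply_eq_stepSum {α : ∀ i j : I, r i j → EReal} (hα : α ∈ RepD r)
    {a b : Fin (n + 1)} (hab : a ≤ b) (h : r (e a) (e b)) :
    α (e a) (e b) h = stepSum (chainSteps hmono α) a b := by
  induction b using Fin.induction with
  | zero =>
    obtain rfl := Fin.le_zero_iff.mp hab
    rw [hα.2.1, stepSum_self]
  | succ j ih =>
    rcases hab.eq_or_lt with rfl | hlt
    · rw [hα.2.1, stepSum_self]
    · have haj : a ≤ j.castSucc := Fin.le_castSucc_iff.mpr hlt
      rw [← hα.2.2 _ _ _ (hmono _ _ haj) (hmono _ _ Fin.castSucc_lt_succ.le) h, ih haj]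
      exact (stepSum_succ_top (m := j) _ haj).symm

lemma RepD.eq_chainCocycle {α : ∀ i j : I, r i j → EReal} (hα : α ∈ RepD r)
    (htrans : ∀ i j k, r i j → r j k → r i k) (hpe : Function.LeftInverse p e)
    (hep : Function.RightInverse p e) :
    α = fun i j _ => chainCocycle p (chainSteps hmono α) i j := by
  funext i j h
  obtain ⟨a, rfl⟩ : ∃ a, e a = i := ⟨p i, hep i⟩
  obtain ⟨b, rfl⟩ : ∃ b, e b = j := ⟨p j, hep j⟩
  rw [chainCocycle, hpe a, hpe b]
  rcases le_or_gt a b with hab | hba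
  · rw [signedExt_of_le hab, RepD.apply_eq_stepSum hmono hα hab]
  · rw [signedExt_of_lt hba, RepD.eq_neg_of_swap hα htrans h (hmono _ _ hba.le),
      RepD.apply_eq_stepSum hmono hα hba.le]

lemma chainSteps_chainCocycle (hpe : Function.LeftInverse p e) (t : Fin n → EReal) :
    chainSteps hmono (fun i j (_ : r i j) => chainCocycle p t i j) = t := by
  funext m
  rw [chainSteps, chainCocycle, hpe, hpe, signedExt_of_le Fin.castSucc_lt_succ.le]
  exact stepSum_self_succ t m

lemma injOn_chainSteps (htrans : ∀ i j k, r i j → r j k → r i k) (he : Function.Bijective e) :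
    Set.InjOn (chainSteps hmono) (RepD r) := by
  intro α hα β hβ hαβ
  have hpe := Function.leftInverse_invFun he.1
  have hep := Function.rightInverse_invFun he.2
  rw [RepD.eq_chainCocycle hmono hα htrans hpe hep, RepD.eq_chainCocycle hmono hβ htrans hpe hep,
    hαβ]

lemma image_chainSteps (htrans : ∀ i j k, r i j → r j k → r i k) (he : Function.Bijective e) :
    chainSteps hmono '' RepD r =
      {t | (∀ m, t m ≠ ⊥) ∧ ∀ m : Fin n, r (e m.succ) (e m.castSucc) → t m ≠ ⊤} := by
  ext t
  constructor
  · rintro ⟨α, hα, rfl⟩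
    exact ⟨fun m => hα.1 _ _ _, fun m hm => RepD.ne_top_of_swap hα htrans _ hm⟩
  · rintro ⟨hbot, htop⟩
    exact ⟨_, chainCocycle_mem_repD hmono htrans (Function.rightInverse_invFun he.2) hbot htop,
      chainSteps_chainCocycle hmono (Function.leftInverse_invFun he.1) t⟩

end Chain

theorem repD_chain_injection_general {I : Type} (r : I → I → Prop)
    (htrans : ∀ i j k, r i j → r j k → r i k)
    (n : ℕ) (e : Fin (n + 1) → I) (he : Function.Bijective e)
    (hmono : ∀ m m' : Fin (n + 1), m ≤ m' → r (e m) (e m')) :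
    Set.InjOn
      (fun (α : ∀ i j : I, r i j → EReal) (m : Fin n) =>
        α (e m.castSucc) (e m.succ) (hmono _ _ (Fin.castSucc_lt_succ (i := m)).le))
      (RepD r) ∧
    (fun (α : ∀ i j : I, r i j → EReal) (m : Fin n) =>
        α (e m.castSucc) (e m.succ) (hmono _ _ (Fin.castSucc_lt_succ (i := m)).le)) '' (RepD r)
      = {t : Fin n → EReal |
          (∀ m : Fin n, t m ≠ ⊥) ∧ ∀ m : Fin n, r (e m.succ) (e m.castSucc) → t m ≠ ⊤} :=
  ⟨injOn_chainSteps hmono htrans he, image_chainSteps hmono htrans he⟩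

/-- Let `I` be a nonempty finite set with a linear preorder `r`, enumerated as
`i₀ ≤_I i₁ ≤_I ⋯ ≤_I iₙ` (via a bijection `e : Fin (n+1) → I`).  The map
`α ↦ (α(i₀,i₁), …, α(i_{n-1},iₙ))` is an injection of `Rep(I, Bℝ⁺)` into
`(ℝ⁺)ⁿ`, whose image consists of exactly those tuples `t` (valued in `ℝ⁺`,
i.e. never `-∞`) such that `t m < ∞` whenever `i_m ≤_I i_{m-1}`. -/
theorem repD_chain_injection {I : Type} [Fintype I] [Nonempty I] (r : I → I → Prop)
    (hrefl : ∀ i, r i i)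
    (htrans : ∀ i j k, r i j → r j k → r i k)
    (htot : ∀ i j, r i j ∨ r j i)
    (n : ℕ) (e : Fin (n + 1) → I) (he : Function.Bijective e)
    (hmono : ∀ m m' : Fin (n + 1), m ≤ m' → r (e m) (e m')) :
    Set.InjOn
      (fun (α : ∀ i j : I, r i j → EReal) (m : Fin n) =>
        α (e m.castSucc) (e m.succ) (hmono _ _ (Fin.castSucc_lt_succ (i := m)).le))
      (RepD r) ∧
    (fun (α : ∀ i j : I, r i j → EReal) (m : Fin n) =>
        α (e m.castSucc) (e m.succ) (hmono _ _ (Fin.castSucc_lt_succ (i := m)).le)) '' (RepD r)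
      = {t : Fin n → EReal |
          (∀ m : Fin n, t m ≠ ⊥) ∧ ∀ m : Fin n, r (e m.succ) (e m.castSucc) → t m ≠ ⊤} :=
  repD_chain_injection_general r htrans n e he hmono
end

section
/- Let L be a broken line with linear order ≤_L and translation distance d_L: (L ∖ L^ℝ) × L → [-∞,∞]. For each fixed x in the non-fixed locus, the function y ↦ d_L(x,y) is nondecreasing with respect to ≤_L on L, takes the value -∞ exactly on {y : y ≤_L μ(t,x) for all t}, takes the value +∞ exactly on {y : μ(t,x) ≤_L y for all t}, and is injective on the complement of those two sets. -/
private lemma exists_real_of_ne_bot_top (a : EReal) (h1 : a ≠ ⊥) (h2 : a ≠ ⊤) :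
    ∃ r : ℝ, a = (r : EReal) := by
  induction a with
  | bot => exact absurd rfl h1
  | coe r => exact ⟨r, rfl⟩
  | top => exact absurd rfl h2

/-- Let `X` be a broken line, with directed homeomorphism `γ : X ≃ₜ [0,1]`
(inducing the canonical order `x ≤_L y ↔ γ x ≤ γ y`), let `x` be a point of the
non-fixed locus, and let `d : X → EReal` be the translation distance
`y ↦ d_L(x,y)`, characterized by: `d y = ∞` iff `μ t x ≤_L y` for all `t`;
`d y = t` (a real number) iff `μ t x = y`; `d y = -∞` iff `y ≤_L μ t x` for all
`t`.  Then `d` is nondecreasing for `≤_L`, takes the value `-∞` exactly on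
`{y | ∀ t, y ≤_L μ t x}`, takes the value `∞` exactly on
`{y | ∀ t, μ t x ≤_L y}`, and is injective on the complement of those two
sets. -/
theorem translationDistance_monotone {X : Type} [TopologicalSpace X] (μ : ℝ → X → X)
    (hcont : Continuous fun p : ℝ × X => μ p.1 p.2)
    (hzero : ∀ x, μ 0 x = x)
    (hadd : ∀ s t x, μ (s + t) x = μ s (μ t x))
    (hfix : {x : X | ∀ t : ℝ, μ t x = x}.Finite)
    (γ : X ≃ₜ unitInterval)
    (hγ : ∀ (x : X) (t : ℝ), 0 ≤ t → γ x ≤ γ (μ t x))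
    (x : X) (hx : ¬ ∀ t : ℝ, μ t x = x)
    (d : X → EReal)
    (hdtop : ∀ y : X, d y = ⊤ ↔ ∀ t : ℝ, γ (μ t x) ≤ γ y)
    (hdbot : ∀ y : X, d y = ⊥ ↔ ∀ t : ℝ, γ y ≤ γ (μ t x))
    (hdreal : ∀ (y : X) (t : ℝ), d y = (t : EReal) ↔ μ t x = y) :
    (∀ y z : X, γ y ≤ γ z → d y ≤ d z) ∧
    (∀ y : X, d y = ⊥ ↔ ∀ t : ℝ, γ y ≤ γ (μ t x)) ∧
    (∀ y : X, d y = ⊤ ↔ ∀ t : ℝ, γ (μ t x) ≤ γ y) ∧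
    (∀ y z : X, d y ≠ ⊥ → d y ≠ ⊤ → d z ≠ ⊥ → d z ≠ ⊤ → d y = d z → y = z) := by

  have hinj : ∀ y z : X, d y ≠ ⊥ → d y ≠ ⊤ → d z ≠ ⊥ → d z ≠ ⊤ → d y = d z → y = z := by
    intro y z hy1 hy2 hz1 hz2 hyz
    obtain ⟨s, hs⟩ := exists_real_of_ne_bot_top (d y) hy1 hy2
    have h1 := (hdreal y s).mp hs
    have h2 := (hdreal z s).mp (hyz ▸ hs)
    rw [← h1, ← h2]
  refine ⟨?_, hdbot, hdtop, hinj⟩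
  intro y z hyz
  by_cases hyb : d y = ⊥
  · simp [hyb]
  by_cases hzt : d z = ⊤
  · simp [hzt]
  by_cases hyt : d y = ⊤
  · exact absurd ((hdtop z).mpr fun t => le_trans ((hdtop y).mp hyt t) hyz) hzt
  by_cases hzb : d z = ⊥
  · exact absurd ((hdbot y).mpr fun t => le_trans hyz ((hdbot z).mp hzb t)) hyb
  obtain ⟨s, hs⟩ := exists_real_of_ne_bot_top (d y) hyb hyt
  obtain ⟨t, ht⟩ := exists_real_of_ne_bot_top (d z) hzb hzt
  have h1 := (hdreal y s).mp hs
  have h2 := (hdreal z t).mp ht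
  rcases le_or_gt s t with h | h
  · rw [hs, ht]; exact_mod_cast h
  · -- t < s : show γ (μ t x) ≤ γ (μ s x), combined with γ y ≤ γ z gives equality
    have hle : γ (μ t x) ≤ γ (μ s x) := by
      have := hγ (μ t x) (s - t) (by linarith)
      rwa [← hadd, sub_add_cancel] at this
    have heq : γ (μ s x) = γ (μ t x) := le_antisymm (h1 ▸ h2 ▸ hyz) hle
    have : μ s x = μ t x := γ.injective heq
    have : (s : EReal) = (t : EReal) := by
      rw [← hs]; exact (hdreal y t).mpr (h1 ▸ this.symm)
    rw [hs, ht, this]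
end

section
/- Let (K, ≤_K) be an amalgam of finite nonempty linearly preordered sets (I, ≤_I) and (J, ≤_J), i.e. a linear preorder on the disjoint union I ⊔ J such that both inclusions I ↪ K and J ↪ K are nondecreasing and essentially surjective (every element of K is =_K-equivalent to an element in the image). Then the partially ordered set Amal(I,J) of amalgams, ordered by: K ≤ K' iff the identity map on I ⊔ J is nondecreasing from (I⊔J, ≤_K) to (I⊔J, ≤_{K'}), is a join-semilattice: every pair K, K' has a least upper bound K ∨ K'. -/
/-- A linear preorder: a reflexive, transitive, total relation. -/
def IsLinearPreorder {K : Type} (r : K → K → Prop) : Prop :=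
  (∀ x, r x x) ∧ (∀ x y z, r x y → r y z → r x z) ∧ (∀ x y, r x y ∨ r y x)

/-- An amalgam of linearly preordered sets `(I, rI)` and `(J, rJ)`: a linear
preorder on the disjoint union `I ⊔ J` such that both inclusions are
nondecreasing and essentially surjective (every element of `I ⊔ J` is
equivalent, in both directions, to an element coming from `I`, and likewise
from `J`). -/
def IsAmalgam {I J : Type} (rI : I → I → Prop) (rJ : J → J → Prop)
    (K : I ⊕ J → I ⊕ J → Prop) : Prop :=
  IsLinearPreorder K ∧
  (∀ i i', rI i i' → K (Sum.inl i) (Sum.inl i')) ∧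
  (∀ j j', rJ j j' → K (Sum.inr j) (Sum.inr j')) ∧
  (∀ x : I ⊕ J, ∃ i : I, K x (Sum.inl i) ∧ K (Sum.inl i) x) ∧
  (∀ x : I ⊕ J, ∃ j : J, K x (Sum.inr j) ∧ K (Sum.inr j) x)

/-- The amalgams of two finite nonempty linearly preordered sets `(I, rI)` and
`(J, rJ)`, ordered by `K ≤ K'` iff the identity map of `I ⊔ J` is nondecreasing
from `≤_K` to `≤_{K'}` (i.e. `K` implies `K'` pointwise), form a
join-semilattice: every pair of amalgams has a least upper bound. -/
theorem amalgam_join_semilattice {I J : Type} [Fintype I] [Fintype J]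
    [Nonempty I] [Nonempty J]
    (rI : I → I → Prop) (rJ : J → J → Prop)
    (hI : IsLinearPreorder rI) (hJ : IsLinearPreorder rJ)
    (K K' : I ⊕ J → I ⊕ J → Prop)
    (hK : IsAmalgam rI rJ K) (hK' : IsAmalgam rI rJ K') :
    ∃ M : I ⊕ J → I ⊕ J → Prop, IsAmalgam rI rJ M ∧
      (∀ x y, K x y → M x y) ∧ (∀ x y, K' x y → M x y) ∧
      ∀ N : I ⊕ J → I ⊕ J → Prop, IsAmalgam rI rJ N →
        (∀ x y, K x y → N x y) → (∀ x y, K' x y → N x y) →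
        (∀ x y, M x y → N x y) := by
  refine ⟨Relation.TransGen (fun a b => K a b ∨ K' a b), ?_, ?_, ?_, ?_⟩
  · obtain ⟨⟨Krefl, Ktrans, Ktot⟩, KmI, KmJ, KesI, KesJ⟩ := hK
    refine ⟨⟨fun x => .single (Or.inl (Krefl x)),
      fun x y z h1 h2 => h1.trans h2,
      fun x y => (Ktot x y).imp (fun h => .single (Or.inl h)) (fun h => .single (Or.inl h))⟩,
      fun i i' h => .single (Or.inl (KmI i i' h)),
      fun j j' h => .single (Or.inl (KmJ j j' h)),
      fun x => ?_, fun x => ?_⟩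
    · obtain ⟨i, h1, h2⟩ := KesI x
      exact ⟨i, .single (Or.inl h1), .single (Or.inl h2)⟩
    · obtain ⟨j, h1, h2⟩ := KesJ x
      exact ⟨j, .single (Or.inl h1), .single (Or.inl h2)⟩
  · exact fun x y h => .single (Or.inl h)
  · exact fun x y h => .single (Or.inr h)
  · rintro N ⟨⟨Nrefl, Ntrans, Ntot⟩, _⟩ hKN hK'N x y h
    induction h with
    | single h => exact h.elim (hKN _ _) (hK'N _ _)
    | tail h1 h2 ih => exact Ntrans _ _ _ ih (h2.elim (hKN _ _) (hK'N _ _))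
end

section
/- Let α ∈ Rep(I, Bℝ⁺) for a nonempty finite linearly preordered set I, and let L = {β: I → [-∞,∞] : for all i ≤_I j, if β(j) > -∞ or α(i,j) < ∞ then β(i) = α(i,j) + β(j)} with the ℝ-action (t · β)(i) = β(i) + t. Partition I into equivalence classes I₁, ..., I_m under the relation identifying i and j when they are connected by a finite value of α, ordered so that classes with earlier index are ≤_I-below later ones. Then L is ℝ-equivariantly homeomorphic to a concatenation of m copies of [-∞,∞]: explicitly, for each 1 ≤ a ≤ m with chosen maximal element i_a ∈ I_a, the map γ_a: [-∞,∞] → L defined by γ_a(t)(i) = ∞ if i ∈ I_b with b < a, γ_a(t)(i) = α(i, i_a) + t if i ∈ I_a, and γ_a(t)(i) = -∞ if i ∈ I_b with b > a, is a well-defined ℝ-equivariant embedding, and the images of the γ_a cover L and overlap only at endpoints. -/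
set_option autoImplicit false

/-- The broken line attached to a point `α ∈ Rep(I, Bℝ⁺)` (with `α` encoded as
a function `I → I → EReal`, constrained on comparable pairs): the set of
`β : I → [-∞,∞]` such that for all `i ≤_I j`, if `β j > -∞` or `α i j < ∞` then
`β i = α i j + β j`. -/
def BrokenModel {I : Type} (r : I → I → Prop) (α : I → I → EReal) : Set (I → EReal) :=
  {β | ∀ i j, r i j → (β j ≠ ⊥ ∨ α i j ≠ ⊤) → β i = α i j + β j}

private lemma EReal.exists_coe_of_ne' {x : EReal} (h1 : x ≠ ⊤) (h2 : x ≠ ⊥) :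
    ∃ r : ℝ, x = (r : EReal) := by
  induction x using EReal.rec with
  | bot => exact absurd rfl h2
  | coe r => exact ⟨r, rfl⟩
  | top => exact absurd rfl h1

private lemma continuous_coe_add' (c : ℝ) : Continuous (fun t : EReal => (c : EReal) + t) := by
  rw [continuous_iff_continuousAt]
  intro t
  have h : ContinuousAt (fun p : EReal × EReal => p.1 + p.2) ((c : EReal), t) :=
    EReal.continuousAt_add (Or.inl (EReal.coe_ne_top c)) (Or.inl (EReal.coe_ne_bot c))
  exact h.comp (Continuous.continuousAt (continuous_const.prodMk continuous_id))

/-- Lemma (bezlem): Given `α ∈ Rep(I, Bℝ⁺)` with `I` a finite nonempty linearly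
preordered set, partition `I` into the equivalence classes `I₁, …, I_m` of the
relation "connected by a finite value of `α`", ordered compatibly with `≤_I`,
and choose a `≤_I`-maximal element `idx a` in each class.  Let `γ a` be the map
`[-∞,∞] → (I → [-∞,∞])` given by `γ a t i = ∞` if `i` lies in an earlier class,
`α i (idx a) + t` if `i ∈ Iₐ`, and `-∞` if `i` lies in a later class.  Then
each `γ a t` lies in the broken line `L` attached to `α`, `γ a` is
`ℝ`-equivariant, is a topological embedding of `[-∞,∞]` into `I → [-∞,∞]`,
the images of the `γ a` cover `L`, and two distinct `γ a`, `γ b` can only meet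
at endpoints.  Hence `L` is `ℝ`-equivariantly a concatenation of `m` copies of
`[-∞,∞]`. -/
theorem brokenModel_concatenation {I : Type} [Fintype I] [Nonempty I]
    (r : I → I → Prop)
    (hrefl : ∀ i, r i i)
    (htrans : ∀ i j k, r i j → r j k → r i k)
    (htot : ∀ i j, r i j ∨ r j i)
    (α : I → I → EReal)
    (hbot : ∀ i j, r i j → α i j ≠ ⊥)
    (hzero : ∀ i, α i i = 0)
    (hcoc : ∀ i j k, r i j → r j k → α i j + α j k = α i k)
    (m : ℕ) (hm : 0 < m)
    (classes : Fin m → Set I)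
    (hcover : ∀ i : I, ∃ a, i ∈ classes a)
    (hdisj : ∀ a b, a ≠ b → Disjoint (classes a) (classes b))
    (hclass : ∀ a, ∀ i ∈ classes a, ∀ j : I,
      (j ∈ classes a ↔ ((r i j ∧ α i j ≠ ⊤) ∨ (r j i ∧ α j i ≠ ⊤))))
    (horder : ∀ a b : Fin m, a ≤ b → ∀ i ∈ classes a, ∀ j ∈ classes b, r i j)
    (idx : Fin m → I)
    (hidx : ∀ a, idx a ∈ classes a ∧ ∀ j ∈ classes a, r j (idx a))
    (γ : Fin m → EReal → I → EReal)
    (hγ : ∀ (a : Fin m) (t : EReal) (i : I),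
      (i ∈ classes a → γ a t i = α i (idx a) + t) ∧
      (∀ b : Fin m, i ∈ classes b → b < a → γ a t i = ⊤) ∧
      (∀ b : Fin m, i ∈ classes b → a < b → γ a t i = ⊥)) :
    (∀ (a : Fin m) (t : EReal), γ a t ∈ BrokenModel r α) ∧
    (∀ (a : Fin m) (t : EReal) (s : ℝ),
      γ a (t + (s : EReal)) = fun i => γ a t i + (s : EReal)) ∧
    (∀ a : Fin m, Topology.IsEmbedding (γ a)) ∧
    (∀ β ∈ BrokenModel r α, ∃ (a : Fin m) (t : EReal), γ a t = β) ∧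
    (∀ (a b : Fin m) (t s : EReal), γ a t = γ b s →
      a = b ∨ ((t = ⊤ ∨ t = ⊥) ∧ (s = ⊤ ∨ s = ⊥))) := by
  have htopne : (⊤ : EReal) ≠ 0 := by simp
  have hmem : ∀ a, idx a ∈ classes a := fun a => (hidx a).1
  -- within a class, α to anything reachable is not ⊤
  have hsame : ∀ a, ∀ i ∈ classes a, ∀ j ∈ classes a, r i j → α i j ≠ ⊤ := by
    intro a i hi j hj hij
    rcases (hclass a i hi j).1 hj with ⟨_, hne⟩ | ⟨hji, hne⟩
    · exact hne
    · intro htop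
      have hs : α i j + α j i = α i i := hcoc i j i hij hji
      rw [htop, hzero, EReal.top_add_of_ne_bot (hbot j i hji)] at hs
      exact htopne hs
  have hfin : ∀ a, ∀ i ∈ classes a, α i (idx a) ≠ ⊤ ∧ α i (idx a) ≠ ⊥ := by
    intro a i hi
    have hr : r i (idx a) := (hidx a).2 i hi
    exact ⟨hsame a i hi (idx a) (hmem a) hr, hbot i (idx a) hr⟩
  -- α between distinct classes is ⊤
  have hcross : ∀ a b : Fin m, a ≠ b → ∀ i ∈ classes a, ∀ j ∈ classes b, r i j → α i j = ⊤ := by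
    intro a b hab i hi j hj hij
    by_contra hne
    have hjb : j ∈ classes a := (hclass a i hi j).2 (Or.inl ⟨hij, hne⟩)
    exact Set.disjoint_left.mp (hdisj a b hab) hjb hj
  -- r between classes respects the class order
  have hle : ∀ a b : Fin m, ∀ i ∈ classes a, ∀ j ∈ classes b, r i j → a ≤ b := by
    intro a b i hi j hj hij
    by_contra hab
    push_neg at hab
    have hji : r j i := horder b a hab.le j hj i hi
    have h1 : α i j = ⊤ := hcross a b hab.ne' i hi j hj hij
    have hs : α i j + α j i = α i i := hcoc i j i hij hji
    rw [h1, hzero, EReal.top_add_of_ne_bot (hbot j i hji)] at hs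
    exact htopne hs
  have hval : ∀ (a : Fin m) (t : EReal), γ a t (idx a) = t := by
    intro a t
    rw [(hγ a t (idx a)).1 (hmem a), hzero, zero_add]
  refine ⟨?_, ?_, ?_, ?_, ?_⟩
  · -- membership in the broken line
    intro a t i j hij h
    obtain ⟨b, hb⟩ := hcover i
    obtain ⟨c, hc⟩ := hcover j
    have hbc : b ≤ c := hle b c i hb j hc hij
    have Hi := hγ a t i
    have Hj := hγ a t j
    rcases lt_trichotomy c a with hca | hca | hca
    · rw [Hi.2.1 b hb (lt_of_le_of_lt hbc hca), Hj.2.1 c hc hca,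
        EReal.add_top_of_ne_bot (hbot i j hij)]
    · have hc' : j ∈ classes a := hca ▸ hc
      have hbc' : b ≤ a := hca ▸ hbc
      rcases lt_or_eq_of_le hbc' with hba | hba
      · have hαtop : α i j = ⊤ := hcross b a hba.ne i hb j hc' hij
        have hne : γ a t j ≠ ⊥ := h.resolve_right (fun hh => hh hαtop)
        rw [Hi.2.1 b hb hba, hαtop, EReal.top_add_of_ne_bot hne]
      · have hb' : i ∈ classes a := hba ▸ hb
        rw [Hi.1 hb', Hj.1 hc', ← hcoc i j (idx a) hij ((hidx a).2 j hc'), add_assoc]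
    · by_cases hbceq : b = c
      · have hab : a < b := by rw [hbceq]; exact hca
        rw [Hi.2.2 b hb hab, Hj.2.2 c hc hca]
        exact (EReal.add_bot _).symm
      · have hαtop : α i j = ⊤ := hcross b c hbceq i hb j hc hij
        have hne : γ a t j ≠ ⊥ := h.resolve_right (fun hh => hh hαtop)
        exact absurd (Hj.2.2 c hc hca) hne
  · -- equivariance
    intro a t s
    funext i
    obtain ⟨b, hb⟩ := hcover i
    have Ht := hγ a t i
    have Hts := hγ a (t + (s : EReal)) i
    rcases lt_trichotomy b a with h | h | h
    · rw [Hts.2.1 b hb h, Ht.2.1 b hb h]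
      exact (EReal.top_add_of_ne_bot (EReal.coe_ne_bot s)).symm
    · subst h
      rw [Hts.1 hb, Ht.1 hb]
      exact (add_assoc _ _ _).symm
    · rw [Hts.2.2 b hb h, Ht.2.2 b hb h]
      exact (EReal.bot_add _).symm
  · -- embedding
    intro a
    have hcont : Continuous (γ a) := by
      apply continuous_pi
      intro i
      obtain ⟨b, hb⟩ := hcover i
      rcases lt_trichotomy b a with h | h | h
      · have heq : (fun t => γ a t i) = fun _ => (⊤ : EReal) :=
          funext fun t => (hγ a t i).2.1 b hb h
        rw [heq]; exact continuous_const
      · have hb' : i ∈ classes a := h ▸ hb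
        obtain ⟨cr, hcr⟩ := EReal.exists_coe_of_ne' (hfin a i hb').1 (hfin a i hb').2
        have heq : (fun t => γ a t i) = fun t => (cr : EReal) + t := by
          funext t; rw [(hγ a t i).1 hb', hcr]
        rw [heq]; exact continuous_coe_add' cr
      · have heq : (fun t => γ a t i) = fun _ => (⊥ : EReal) :=
          funext fun t => (hγ a t i).2.2 b hb h
        rw [heq]; exact continuous_const
    have hinj : Function.Injective (γ a) := by
      intro t s h
      have h1 := congrFun h (idx a)
      rwa [hval, hval] at h1
    exact (hcont.isClosedEmbedding hinj).isEmbedding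
  · -- surjectivity onto the broken line
    intro β hβ
    have hclassval : ∀ b, ∀ i ∈ classes b, β i = α i (idx b) + β (idx b) := by
      intro b i hi
      exact hβ i (idx b) ((hidx b).2 i hi)
        (Or.inr (hsame b i hi (idx b) (hmem b) ((hidx b).2 i hi)))
    have hmono : ∀ b c : Fin m, b < c → β (idx c) ≠ ⊥ → β (idx b) = ⊤ := by
      intro b c hbc hne
      have hr : r (idx b) (idx c) := horder b c hbc.le _ (hmem b) _ (hmem c)
      have h1 := hβ (idx b) (idx c) hr (Or.inl hne)
      rw [h1, hcross b c hbc.ne _ (hmem b) _ (hmem c) hr, EReal.top_add_of_ne_bot hne]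
    by_cases hall : ∀ b, β (idx b) = ⊤
    · obtain ⟨n, rfl⟩ : ∃ n, m = n + 1 := ⟨m - 1, by omega⟩
      refine ⟨Fin.last n, ⊤, ?_⟩
      funext i
      obtain ⟨b, hb⟩ := hcover i
      have hβi : β i = ⊤ := by
        rw [hclassval b i hb, hall b, EReal.add_top_of_ne_bot (hfin b i hb).2]
      rcases lt_or_eq_of_le (Fin.le_last b) with h | h
      · rw [(hγ (Fin.last n) ⊤ i).2.1 b hb h, hβi]
      · have hb' : i ∈ classes (Fin.last n) := h ▸ hb
        rw [(hγ (Fin.last n) ⊤ i).1 hb',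
          EReal.add_top_of_ne_bot (hfin (Fin.last n) i hb').2, hβi]
    · push_neg at hall
      obtain ⟨b0, hb0⟩ := hall
      classical
      obtain ⟨a, haS, hamin⟩ : ∃ a : Fin m, β (idx a) ≠ ⊤ ∧ ∀ b, β (idx b) ≠ ⊤ → a ≤ b := by
        obtain ⟨a, ha, hmin⟩ := Finset.exists_min_image
          (Finset.univ.filter fun b => β (idx b) ≠ ⊤) id ⟨b0, by simp [hb0]⟩
        exact ⟨a, (Finset.mem_filter.mp ha).2, fun b hb => hmin b (by simp [hb])⟩
      refine ⟨a, β (idx a), ?_⟩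
      funext i
      obtain ⟨b, hb⟩ := hcover i
      rcases lt_trichotomy b a with h | h | h
      · have hbtop : β (idx b) = ⊤ := by
          by_contra hne
          exact absurd (hamin b hne) (not_le.mpr h)
        rw [(hγ a _ i).2.1 b hb h, hclassval b i hb, hbtop,
          EReal.add_top_of_ne_bot (hfin b i hb).2]
      · have hb' : i ∈ classes a := h ▸ hb
        rw [(hγ a _ i).1 hb', hclassval a i hb']
      · have hbbot : β (idx b) = ⊥ := by
          by_contra hne
          exact haS (hmono a b h hne)
        rw [(hγ a _ i).2.2 b hb h, hclassval b i hb, hbbot, EReal.add_bot]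
  · -- endpoint overlaps
    intro a b t s h
    rcases lt_trichotomy a b with hab | hab | hab
    · right
      have h1 := congrFun h (idx a)
      rw [hval, (hγ b s (idx a)).2.1 a (hmem a) hab] at h1
      have h2 := congrFun h (idx b)
      rw [hval, (hγ a t (idx b)).2.2 b (hmem b) hab] at h2
      exact ⟨Or.inl h1, Or.inr h2.symm⟩
    · exact Or.inl hab
    · right
      have h1 := congrFun h (idx b)
      rw [hval, (hγ a t (idx b)).2.1 b (hmem b) hab] at h1
      have h2 := congrFun h (idx a)
      rw [hval, (hγ b s (idx a)).2.2 a (hmem a) hab] at h2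
      exact ⟨Or.inr h2, Or.inl h1.symm⟩
end

section
/- Let I and J be nonempty finite linearly ordered sets, regarded as objects of Tw(LinOrd) via the indiscrete relation, with Φ(I,≃_I) = {α ∈ Rep(I, Bℝ⁺) : α(i,j) < ∞ ⟹ i ≃_I j}. For any objects (I,≃_I), (J,≃_J) of Tw(LinOrd), the natural closed embedding Rep(I,Bℝ⁺) × Rep(J,Bℝ⁺) → Rep(I ⋆ J, Bℝ⁺) — sending (α,β) to γ with γ = α on pairs from I, γ = β on pairs from J, and γ(i,j) = ∞ for i ∈ I, j ∈ J — restricts to a homeomorphism Φ(I,≃_I) × Φ(J,≃_J) ≅ Φ(I ⋆ J, ≃_{I⋆J}). -/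
set_option autoImplicit false

/-- The comparable pairs `{(x,y) : x ≤ y}` of a preordered set. -/
def PairsLE (X : Type) [Preorder X] : Type := {p : X × X // p.1 ≤ p.2}

/-- `Rep(I, Bℝ⁺)`, topologized as a subspace of the finite product
`∏_{i ≤ j} ℝ⁺`, where `ℝ⁺ = (-∞,∞]` is realized inside `EReal`: functions
on the comparable pairs, never `⊥ = -∞`, zero on the diagonal, satisfying the
cocycle condition. -/
def RepSetLE (X : Type) [Preorder X] : Set (PairsLE X → EReal) :=
  {α | (∀ p, α p ≠ ⊥) ∧ (∀ x : X, α ⟨(x, x), le_refl x⟩ = 0) ∧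
    ∀ (x y z : X) (hxy : x ≤ y) (hyz : y ≤ z),
      α ⟨(x, y), hxy⟩ + α ⟨(y, z), hyz⟩ = α ⟨(x, z), hxy.trans hyz⟩}

/-- The closed subset `Φ(I, ≃_I) ⊆ Rep(I, Bℝ⁺)` consisting of those `α` with
`α(i,j) < ∞ ⟹ i ≃_I j`. -/
def PhiSet (X : Type) [Preorder X] (E : X → X → Prop) : Set (PairsLE X → EReal) :=
  {α | α ∈ RepSetLE X ∧ ∀ (x y : X) (h : x ≤ y), α ⟨(x, y), h⟩ ≠ ⊤ → E x y}

/-- Concatenation of equivalence relations on the lexicographic sum. -/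
def starRel {I J : Type} (E : I → I → Prop) (F : J → J → Prop)
    (x y : I ⊕ₗ J) : Prop :=
  match ofLex x, ofLex y with
  | Sum.inl a, Sum.inl a' => E a a'
  | Sum.inr b, Sum.inr b' => F b b'
  | _, _ => False

/-- The natural map `Rep(I,Bℝ⁺) × Rep(J,Bℝ⁺) → Rep(I ⋆ J, Bℝ⁺)`: `γ = α` on
pairs from `I`, `γ = β` on pairs from `J`, and `γ(i,j) = ∞` for `i ∈ I`,
`j ∈ J`. -/
noncomputable def concatMap {I J : Type} [LinearOrder I] [LinearOrder J]
    (α : PairsLE I → EReal) (β : PairsLE J → EReal) :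
    PairsLE (I ⊕ₗ J) → EReal :=
  fun p =>
    match ofLex p.1.1, ofLex p.1.2 with
    | Sum.inl i, Sum.inl i' => if h : i ≤ i' then α ⟨(i, i'), h⟩ else ⊤
    | Sum.inr j, Sum.inr j' => if h : j ≤ j' then β ⟨(j, j'), h⟩ else ⊤
    | _, _ => ⊤

/-! Restricting a function on the pairs of `I ⊕ₗ J` to the pairs from `I` and from `J` is a
continuous left inverse of `concatMap`, so `concatMap` is an embedding on any product of
subspaces. Its image consists of the `γ` with `γ(i,j) = ⊤` for all `i ∈ I`, `j ∈ J`, a closed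
condition; on `Φ(I ⋆ J)` it holds automatically, because `≃_{I⋆J}` relates no element of `I`
to one of `J`. -/

open Topology

namespace PairsLE

variable {X Y : Type} [Preorder X] [Preorder Y]

def map (f : X → Y) (hf : Monotone f) (p : PairsLE X) : PairsLE Y :=
  ⟨(f p.1.1, f p.1.2), hf p.2⟩

theorem continuous_comp_map {f : X → Y} (hf : Monotone f) :
    Continuous fun γ : PairsLE Y → EReal => γ ∘ map f hf :=
  continuous_pi fun _ => continuous_apply _

theorem comp_map_mem_repSetLE {f : X → Y} (hf : Monotone f) {γ : PairsLE Y → EReal}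
    (hγ : γ ∈ RepSetLE Y) : γ ∘ map f hf ∈ RepSetLE X :=
  ⟨fun _ => hγ.1 _, fun x => hγ.2.1 (f x), fun _ _ _ _ _ => hγ.2.2 _ _ _ _ _⟩

theorem comp_map_mem_phiSet {f : X → Y} (hf : Monotone f) {E : Y → Y → Prop}
    {γ : PairsLE Y → EReal} (hγ : γ ∈ PhiSet Y E) :
    γ ∘ map f hf ∈ PhiSet X (fun x x' => E (f x) (f x')) :=
  ⟨comp_map_mem_repSetLE hf hγ.1, fun _ _ _ => hγ.2 _ _ _⟩

variable {I J : Type} [Preorder I] [Preorder J]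

abbrev inl : PairsLE I → PairsLE (I ⊕ₗ J) := map _ Sum.Lex.inl_mono

abbrev inr : PairsLE J → PairsLE (I ⊕ₗ J) := map _ Sum.Lex.inr_mono

@[elab_as_elim]
theorem sumLex_induction {motive : PairsLE (I ⊕ₗ J) → Prop}
    (inl_inl : ∀ i i' h, motive ⟨(toLex (Sum.inl i), toLex (Sum.inl i')), h⟩)
    (inr_inr : ∀ j j' h, motive ⟨(toLex (Sum.inr j), toLex (Sum.inr j')), h⟩)
    (inl_inr : ∀ i j h, motive ⟨(toLex (Sum.inl i), toLex (Sum.inr j)), h⟩)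
    (p : PairsLE (I ⊕ₗ J)) : motive p := by
  obtain ⟨⟨x | x, y | y⟩, h⟩ := p
  · exact inl_inl x y h
  · exact inl_inr x y h
  · exact absurd h Sum.Lex.not_inr_le_inl
  · exact inr_inr x y h

end PairsLE

section Concat

variable {I J : Type} [LinearOrder I] [LinearOrder J]

@[simp]
theorem concatMap_inl_inl (α : PairsLE I → EReal) (β : PairsLE J → EReal) (i i' : I)
    (h : toLex (Sum.inl i) ≤ (toLex (Sum.inl i') : I ⊕ₗ J)) :
    concatMap α β ⟨(toLex (Sum.inl i), toLex (Sum.inl i')), h⟩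
      = α ⟨(i, i'), Sum.Lex.inl_le_inl_iff.mp h⟩ :=
  dif_pos _

@[simp]
theorem concatMap_inr_inr (α : PairsLE I → EReal) (β : PairsLE J → EReal) (j j' : J)
    (h : toLex (Sum.inr j) ≤ (toLex (Sum.inr j') : I ⊕ₗ J)) :
    concatMap α β ⟨(toLex (Sum.inr j), toLex (Sum.inr j')), h⟩
      = β ⟨(j, j'), Sum.Lex.inr_le_inr_iff.mp h⟩ :=
  dif_pos _

@[simp]
theorem concatMap_inl_inr (α : PairsLE I → EReal) (β : PairsLE J → EReal) (i : I) (j : J)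
    (h : toLex (Sum.inl i) ≤ (toLex (Sum.inr j) : I ⊕ₗ J)) :
    concatMap α β ⟨(toLex (Sum.inl i), toLex (Sum.inr j)), h⟩ = ⊤ :=
  rfl

theorem concatMap_comp_inl (α : PairsLE I → EReal) (β : PairsLE J → EReal) :
    concatMap α β ∘ PairsLE.inl = α :=
  funext fun p => dif_pos p.2

theorem concatMap_comp_inr (α : PairsLE I → EReal) (β : PairsLE J → EReal) :
    concatMap α β ∘ PairsLE.inr = β :=
  funext fun p => dif_pos p.2

theorem concatMap_comp_inl_comp_inr {γ : PairsLE (I ⊕ₗ J) → EReal}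
    (hγ : ∀ i j, γ ⟨(toLex (Sum.inl i), toLex (Sum.inr j)), Sum.Lex.inl_le_inr i j⟩ = ⊤) :
    concatMap (γ ∘ PairsLE.inl) (γ ∘ PairsLE.inr) = γ := by
  funext p
  induction p using PairsLE.sumLex_induction with
  | inl_inl i i' h => exact concatMap_inl_inl _ _ i i' h
  | inr_inr j j' h => exact concatMap_inr_inr _ _ j j' h
  | inl_inr i j h => exact (hγ i j).symm

theorem continuous_concatMap :
    Continuous fun q : (PairsLE I → EReal) × (PairsLE J → EReal) => concatMap q.1 q.2 := by
  refine continuous_pi fun p => ?_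
  induction p using PairsLE.sumLex_induction with
  | inl_inl i i' h =>
    simp only [concatMap_inl_inl]
    fun_prop
  | inr_inr j j' h =>
    simp only [concatMap_inr_inr]
    fun_prop
  | inl_inr i j h => simpa only [concatMap_inl_inr] using continuous_const

theorem concatMap_mem_repSetLE {α : PairsLE I → EReal} {β : PairsLE J → EReal}
    (hα : α ∈ RepSetLE I) (hβ : β ∈ RepSetLE J) : concatMap α β ∈ RepSetLE (I ⊕ₗ J) := by
  refine ⟨fun p => ?_, fun x => ?_, fun x y z => ?_⟩
  · induction p using PairsLE.sumLex_induction with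
    | inl_inl i i' h => simpa only [concatMap_inl_inl] using hα.1 _
    | inr_inr j j' h => simpa only [concatMap_inr_inr] using hβ.1 _
    | inl_inr i j h => simpa only [concatMap_inl_inr] using top_ne_bot
  · cases x with | h x => ?_
    rcases x with i | j
    · simpa only [concatMap_inl_inl] using hα.2.1 i
    · simpa only [concatMap_inr_inr] using hβ.2.1 j
  · cases x with | h x => ?_
    cases y with | h y => ?_
    cases z with | h z => ?_
    rcases x with x | x <;> rcases y with y | y <;> rcases z with z | z <;> intro hxy hyz <;>
      simp only [concatMap_inl_inl, concatMap_inr_inr, concatMap_inl_inr]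
    all_goals first
      | exact hα.2.2 _ _ _ _ _
      | exact hβ.2.2 _ _ _ _ _
      | exact EReal.add_top_of_ne_bot (hα.1 _)
      | exact EReal.top_add_of_ne_bot (hβ.1 _)
      | exact absurd hxy Sum.Lex.not_inr_le_inl
      | exact absurd hyz Sum.Lex.not_inr_le_inl

theorem concatMap_mem_phiSet {E : I → I → Prop} {F : J → J → Prop}
    {α : PairsLE I → EReal} {β : PairsLE J → EReal}
    (hα : α ∈ PhiSet I E) (hβ : β ∈ PhiSet J F) :
    concatMap α β ∈ PhiSet (I ⊕ₗ J) (starRel E F) := by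
  refine ⟨concatMap_mem_repSetLE hα.1 hβ.1, fun x y h => ?_⟩
  suffices ∀ p : PairsLE (I ⊕ₗ J), concatMap α β p ≠ ⊤ → starRel E F p.1.1 p.1.2 from
    this ⟨(x, y), h⟩
  intro p
  induction p using PairsLE.sumLex_induction with
  | inl_inl i i' h =>
    rw [concatMap_inl_inl]
    exact hα.2 i i' _
  | inr_inr j j' h =>
    rw [concatMap_inr_inr]
    exact hβ.2 j j' _
  | inl_inr i j h => exact fun hne => absurd rfl hne

theorem range_concatMap (S : Set (PairsLE I → EReal)) (T : Set (PairsLE J → EReal)) :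
    Set.range (fun q : S × T => concatMap q.1.1 q.2.1)
      = {γ | (∀ i j, γ ⟨(toLex (Sum.inl i), toLex (Sum.inr j)), Sum.Lex.inl_le_inr i j⟩ = ⊤) ∧
          γ ∘ PairsLE.inl ∈ S ∧ γ ∘ PairsLE.inr ∈ T} := by
  ext γ
  constructor
  · rintro ⟨⟨⟨α, hα⟩, ⟨β, hβ⟩⟩, rfl⟩
    exact ⟨fun i j => rfl, (concatMap_comp_inl α β).symm ▸ hα,
      (concatMap_comp_inr α β).symm ▸ hβ⟩
  · rintro ⟨hcross, hS, hT⟩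
    exact ⟨(⟨_, hS⟩, ⟨_, hT⟩), concatMap_comp_inl_comp_inr hcross⟩

theorem isEmbedding_concatMap (S : Set (PairsLE I → EReal)) (T : Set (PairsLE J → EReal)) :
    IsEmbedding fun q : S × T => concatMap q.1.1 q.2.1 := by
  have hrestrict : Continuous fun γ : PairsLE (I ⊕ₗ J) → EReal =>
      (γ ∘ PairsLE.inl, γ ∘ PairsLE.inr) :=
    (PairsLE.continuous_comp_map _).prodMk (PairsLE.continuous_comp_map _)
  refine .of_comp (continuous_concatMap.comp (continuous_subtype_val.prodMap
    continuous_subtype_val)) hrestrict ?_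
  convert IsEmbedding.subtypeVal.prodMap IsEmbedding.subtypeVal using 1
  funext q
  exact Prod.ext (concatMap_comp_inl q.1.1 q.2.1) (concatMap_comp_inr q.1.1 q.2.1)

theorem isClosed_range_concatMap_repSetLE :
    IsClosed {γ : ↥(RepSetLE (I ⊕ₗ J)) | (γ : PairsLE (I ⊕ₗ J) → EReal) ∈
      Set.range fun q : ↥(RepSetLE I) × ↥(RepSetLE J) => concatMap q.1.1 q.2.1} := by
  have hrange : {γ : ↥(RepSetLE (I ⊕ₗ J)) | (γ : PairsLE (I ⊕ₗ J) → EReal) ∈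
      Set.range fun q : ↥(RepSetLE I) × ↥(RepSetLE J) => concatMap q.1.1 q.2.1}
      = ⋂ (i : I) (j : J), {γ : ↥(RepSetLE (I ⊕ₗ J)) |
          γ.1 ⟨(toLex (Sum.inl i), toLex (Sum.inr j)), Sum.Lex.inl_le_inr i j⟩ = ⊤} := by
    ext γ
    simp only [range_concatMap, Set.mem_ofPred_eq, Set.mem_iInter]
    exact ⟨And.left, fun hcross => ⟨hcross, PairsLE.comp_map_mem_repSetLE _ γ.2,
      PairsLE.comp_map_mem_repSetLE _ γ.2⟩⟩
  rw [hrange]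
  exact isClosed_iInter fun i => isClosed_iInter fun j =>
    isClosed_eq ((continuous_apply _).comp continuous_subtype_val) continuous_const

theorem range_concatMap_phiSet (E : I → I → Prop) (F : J → J → Prop) :
    Set.range (fun q : ↥(PhiSet I E) × ↥(PhiSet J F) => concatMap q.1.1 q.2.1)
      = PhiSet (I ⊕ₗ J) (starRel E F) := by
  rw [range_concatMap]
  ext γ
  refine ⟨fun ⟨hcross, hα, hβ⟩ => ?_, fun hγ => ⟨fun i j => ?_,
    PairsLE.comp_map_mem_phiSet _ hγ, PairsLE.comp_map_mem_phiSet _ hγ⟩⟩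
  · rw [← concatMap_comp_inl_comp_inr hcross]
    exact concatMap_mem_phiSet hα hβ
  · by_contra hne
    exact hγ.2 _ _ _ hne

end Concat

theorem phi_concatenation_homeomorphism_general {I J : Type}
    [LinearOrder I] [LinearOrder J]
    (E : I → I → Prop) (F : J → J → Prop) :
    (Topology.IsEmbedding
        (fun q : ↥(RepSetLE I) × ↥(RepSetLE J) => concatMap q.1.1 q.2.1) ∧
      (∀ q : ↥(RepSetLE I) × ↥(RepSetLE J),
        concatMap q.1.1 q.2.1 ∈ RepSetLE (I ⊕ₗ J)) ∧
      IsClosed {γ : ↥(RepSetLE (I ⊕ₗ J)) |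
        (γ : PairsLE (I ⊕ₗ J) → EReal) ∈
          Set.range fun q : ↥(RepSetLE I) × ↥(RepSetLE J) => concatMap q.1.1 q.2.1}) ∧
    (Topology.IsEmbedding
        (fun q : ↥(PhiSet I E) × ↥(PhiSet J F) => concatMap q.1.1 q.2.1) ∧
      Set.range (fun q : ↥(PhiSet I E) × ↥(PhiSet J F) => concatMap q.1.1 q.2.1)
        = PhiSet (I ⊕ₗ J) (starRel E F)) :=
  ⟨⟨isEmbedding_concatMap _ _, fun q => concatMap_mem_repSetLE q.1.2 q.2.2,
    isClosed_range_concatMap_repSetLE⟩,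
    isEmbedding_concatMap _ _, range_concatMap_phiSet E F⟩

/-- The natural map `Rep(I,Bℝ⁺) × Rep(J,Bℝ⁺) → Rep(I ⋆ J, Bℝ⁺)` is a closed
embedding, and it restricts to a homeomorphism
`Φ(I,≃_I) × Φ(J,≃_J) ≅ Φ(I ⋆ J, ≃_{I⋆J})` (an embedding whose range is exactly
`Φ(I ⋆ J, ≃_{I⋆J})`). -/
theorem phi_concatenation_homeomorphism {I J : Type}
    [LinearOrder I] [LinearOrder J] [Fintype I] [Fintype J] [Nonempty I] [Nonempty J]
    (E : I → I → Prop) (F : J → J → Prop)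
    (hE : Equivalence E) (hF : Equivalence F)
    (hEconv : ∀ i j k : I, i ≤ j → j ≤ k → E i k → E i j ∧ E j k)
    (hFconv : ∀ i j k : J, i ≤ j → j ≤ k → F i k → F i j ∧ F j k) :
    (Topology.IsEmbedding
        (fun q : ↥(RepSetLE I) × ↥(RepSetLE J) => concatMap q.1.1 q.2.1) ∧
      (∀ q : ↥(RepSetLE I) × ↥(RepSetLE J),
        concatMap q.1.1 q.2.1 ∈ RepSetLE (I ⊕ₗ J)) ∧
      IsClosed {γ : ↥(RepSetLE (I ⊕ₗ J)) |
        (γ : PairsLE (I ⊕ₗ J) → EReal) ∈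
          Set.range fun q : ↥(RepSetLE I) × ↥(RepSetLE J) => concatMap q.1.1 q.2.1}) ∧
    (Topology.IsEmbedding
        (fun q : ↥(PhiSet I E) × ↥(PhiSet J F) => concatMap q.1.1 q.2.1) ∧
      Set.range (fun q : ↥(PhiSet I E) × ↥(PhiSet J F) => concatMap q.1.1 q.2.1)
        = PhiSet (I ⊕ₗ J) (starRel E F)) :=
  phi_concatenation_homeomorphism_general E F
end
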